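/- arXiv:1801.01429 — 3 statements merged into one kernel-verified Lean document; each statement's English description precedes it below -/
import Mathlib

section
/- Let k be a field and V a finite-dimensional k-vector space. Let V⟦t⟧ denote the module of formal power series with coefficients in V (i.e. functions ℕ → V with the evident addition), regarded as a module over the power series ring k⟦t⟧. For an endomorphism T of V, let ι_T : V⟦t⟧ → V⟦t⟧ be the unique continuous k⟦t⟧-linear endomorphism satisfying ι_T(v·t^i) = T(v)·t^i − v·t^{i+1} for all v ∈ V and i ∈ ℕ, and let K_T be the range of ι_T. Then the assignment T ↦ K_T is a bijection from the set of NILPOTENT endomorphisms of V onto the set of k⟦t⟧-submodules K ⊆ V⟦t⟧ such that the map v ↦ (v·t^0 mod K) is a k-linear isomorphism from V onto V⟦t⟧/K. -/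
/-- `V⟦t⟧` is an additive group when `V` is. -/
noncomputable instance hahnModuleAddCommGroup (k V : Type*) [Field k] [AddCommGroup V]
    [Module k V] : AddCommGroup (HahnModule ℕ k V) :=
  inferInstanceAs (AddCommGroup (HahnSeries ℕ V))

/-- The module `V⟦t⟧` of formal power series with coefficients in `V`,
as a module over the power series ring `k⟦t⟧`: we realize it as the Hahn module
over `ℕ`, with the `k⟦t⟧`-action obtained through the canonical ring isomorphism
`k⟦t⟧ ≃+* HahnSeries ℕ k`. -/
noncomputable instance powerSeriesModule (k V : Type*) [Field k] [AddCommGroup V]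
    [Module k V] : Module (PowerSeries k) (HahnModule ℕ k V) :=
  Module.compHom (HahnModule ℕ k V)
    ((HahnSeries.toPowerSeries (R := k)).symm.toRingHom)

section
variable {k V : Type*} [Field k] [AddCommGroup V] [Module k V]

local notation "H" => HahnModule ℕ k V
local notation "R" => PowerSeries k

-- test : smul unfolds
example (f : PowerSeries k) (x : H) : f • x = (HahnSeries.toPowerSeries.symm f) • x := rfl

-- coefficient function
noncomputable def cf (x : H) (n : ℕ) : V := ((HahnModule.of k).symm x).coeff n

lemma cf_add (x y : H) (n : ℕ) : cf (x + y) n = cf x n + cf y n := by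
  simp [cf, HahnModule.of_symm_add]

lemma cf_ext {x y : H} (h : ∀ n, cf x n = cf y n) : x = y := by
  apply (HahnModule.of k).symm.injective
  exact HahnSeries.coeff_injective (funext h)

lemma cf_single (i : ℕ) (v : V) (n : ℕ) :
    cf (HahnModule.of k (HahnSeries.single i v)) n = if n = i then v else 0 := by
  simp [cf]
  split
  · subst ‹n = i›; simp
  · rw [HahnSeries.coeff_single_of_ne ‹n ≠ i›]


-- construct an element from arbitrary coefficients
lemma natSet_isPWO (s : Set ℕ) : s.IsPWO :=
  Set.IsWF.isPWO (WellFounded.wellFoundedOn (wellFounded_lt (α := ℕ)))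

noncomputable def mkH (k : Type*) [Field k] {V : Type*} [AddCommGroup V] [Module k V]
    (f : ℕ → V) : HahnModule ℕ k V :=
  HahnModule.of k ((⟨f, natSet_isPWO _⟩ : HahnSeries ℕ V))

@[simp] lemma cf_mkH (f : ℕ → V) (n : ℕ) : cf (mkH k f) n = f n := rfl

lemma cf_zero (n : ℕ) : cf (0 : H) n = 0 := rfl

lemma cf_sub (x y : H) (n : ℕ) : cf (x - y) n = cf x n - cf y n := by
  show (((HahnModule.of k).symm x) - ((HahnModule.of k).symm y)).coeff n = _
  rw [HahnSeries.coeff_sub]; rfl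

-- coefficients of C c • x
lemma cf_C_smul (c : k) (x : H) (n : ℕ) :
    cf (((PowerSeries.C c : PowerSeries k)) • x) n = c • cf x n := by
  show ((HahnModule.of k).symm ((HahnSeries.toPowerSeries.symm ((PowerSeries.C c : PowerSeries k))) • x)).coeff n
      = c • cf x n
  have h : (HahnSeries.toPowerSeries.symm ((PowerSeries.C c : PowerSeries k))) = HahnSeries.single 0 c := by
    apply HahnSeries.coeff_injective; funext m
    rw [HahnSeries.coeff_toPowerSeries_symm]
    by_cases hm : m = 0
    · subst hm; simp
    · simp [HahnSeries.coeff_single_of_ne hm, PowerSeries.coeff_C, hm]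
  rw [h]
  exact HahnModule.coeff_single_zero_smul

lemma cf_X_smul_zero (x : H) : cf ((PowerSeries.X : PowerSeries k) • x) 0 = 0 := by
  have h : (HahnSeries.toPowerSeries.symm (PowerSeries.X : PowerSeries k))
      = HahnSeries.single 1 (1 : k) := by
    apply HahnSeries.coeff_injective; funext m
    rw [HahnSeries.coeff_toPowerSeries_symm]
    by_cases hm : m = 1
    · subst hm; simp
    · simp [HahnSeries.coeff_single_of_ne hm, PowerSeries.coeff_X, hm]
  show ((HahnModule.of k).symm ((HahnSeries.toPowerSeries.symm (PowerSeries.X : PowerSeries k)) • x)).coeff 0 = 0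
  rw [h, HahnModule.coeff_smul]
  apply Finset.sum_eq_zero
  rintro ⟨i, j⟩ hij
  simp only [Finset.mem_vaddAntidiagonal] at hij
  exfalso
  have hi : i ∈ (HahnSeries.single 1 (1:k)).support := hij.1
  have h1 : i = 1 := by
    by_contra hne
    exact hi (HahnSeries.coeff_single_of_ne hne)
  have h2 : i + j = 0 := by rw [← vadd_eq_add]; exact hij.2.2
  omega

lemma cf_X_smul_succ (x : H) (n : ℕ) :
    cf ((PowerSeries.X : PowerSeries k) • x) (n + 1) = cf x n := by
  have h : (HahnSeries.toPowerSeries.symm (PowerSeries.X : PowerSeries k))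
      = HahnSeries.single 1 (1 : k) := by
    apply HahnSeries.coeff_injective; funext m
    rw [HahnSeries.coeff_toPowerSeries_symm]
    by_cases hm : m = 1
    · subst hm; simp
    · simp [HahnSeries.coeff_single_of_ne hm, PowerSeries.coeff_X, hm]
  show ((HahnModule.of k).symm ((HahnSeries.toPowerSeries.symm (PowerSeries.X : PowerSeries k)) • x)).coeff (n+1) = cf x n
  rw [h]
  have h3 : ((HahnModule.of k).symm ((HahnSeries.single (1:ℕ) (1:k)) • x)).coeff ((1:ℕ) +ᵥ n)
      = (1:k) • ((HahnModule.of k).symm x).coeff n := HahnModule.coeff_single_smul_vadd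
  rw [show (1 : ℕ) +ᵥ n = n + 1 by rw [vadd_eq_add]; omega] at h3
  rw [h3, one_smul]; rfl

lemma cf_sum {α : Type*} (s : Finset α) (g : α → H) (n : ℕ) :
    cf (∑ i ∈ s, g i) n = ∑ i ∈ s, cf (g i) n := by
  classical
  induction s using Finset.induction_on with
  | empty => simp [cf_zero]
  | insert _ _ h ih => rw [Finset.sum_insert h, Finset.sum_insert h, cf_add, ih]

lemma cf_pow_smul (m : ℕ) (x : H) (n : ℕ) :
    cf ((PowerSeries.X : PowerSeries k)^m • x) n = if m ≤ n then cf x (n - m) else 0 := by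
  induction m generalizing n x with
  | zero => simp
  | succ m ih =>
    have hs : (PowerSeries.X : PowerSeries k)^(m+1) • x
        = (PowerSeries.X : PowerSeries k) • ((PowerSeries.X : PowerSeries k)^m • x) := by
      rw [← mul_smul, ← pow_succ']
    rw [hs]
    cases n with
    | zero => rw [cf_X_smul_zero]; simp
    | succ n =>
      rw [cf_X_smul_succ, ih]
      by_cases h : m ≤ n
      · simp [h, Nat.succ_le_succ h, Nat.succ_sub_succ]
      · simp [h, fun hc => h (Nat.le_of_succ_le_succ hc)]

lemma decomp (x : H) (n : ℕ) :
    x = (∑ i ∈ Finset.range n, HahnModule.of k (HahnSeries.single i (cf x i)))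
      + (PowerSeries.X : PowerSeries k)^n • mkH k (fun j => cf x (n + j)) := by
  apply cf_ext; intro m
  rw [cf_add, cf_sum, cf_pow_smul]
  simp only [cf_single, cf_mkH]
  rw [Finset.sum_ite_eq (Finset.range n) m (fun i => cf x i)]
  by_cases h : m < n
  · simp [Finset.mem_range.mpr h, not_le.mpr h]
  · have h' : n ≤ m := not_lt.mp h
    have he : n + (m - n) = m := by omega
    simp only [Finset.mem_range, h, if_neg h, if_pos h', zero_add, he, if_false]

lemma iota_cf (ι : Module.End k V → (HahnModule ℕ k V →ₗ[PowerSeries k] HahnModule ℕ k V))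
    (hι : ∀ (T : Module.End k V) (v : V) (i : ℕ),
      ι T (HahnModule.of k (HahnSeries.single i v)) =
        HahnModule.of k (HahnSeries.single i (T v)) -
          HahnModule.of k (HahnSeries.single (i + 1) v))
    (T : Module.End k V) (x : H) (n : ℕ) :
    cf (ι T x) n = T (cf x n) - (if n = 0 then 0 else cf x (n - 1)) := by
  have hx : ι T x = (∑ i ∈ Finset.range (n+1),
        ι T (HahnModule.of k (HahnSeries.single i (cf x i))))
      + (PowerSeries.X : PowerSeries k)^(n+1) • ι T (mkH k fun j => cf x (n+1+j)) := by
    conv_lhs => rw [decomp x (n+1)]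
    rw [map_add, map_smul, map_sum]
  rw [hx, cf_add, cf_pow_smul, if_neg (by omega), add_zero, cf_sum]
  simp only [hι, cf_sub, cf_single]
  rw [Finset.sum_sub_distrib,
    Finset.sum_ite_eq (Finset.range (n+1)) n (fun i => T (cf x i)),
    if_pos (Finset.mem_range.mpr (by omega))]
  congr 1
  cases n with
  | zero => simp
  | succ m =>
    have : ∀ i ∈ Finset.range (m+2),
        (if m + 1 = i + 1 then cf x i else 0) = (if m = i then cf x i else 0) := by
      intro i _
      by_cases h : m = i
      · simp [h]
      · rw [if_neg (by omega), if_neg h]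
    rw [Finset.sum_congr rfl this,
      Finset.sum_ite_eq (Finset.range (m+2)) m (fun i => cf x i),
      if_pos (Finset.mem_range.mpr (by omega))]
    simp

lemma key_sum (T : Module.End k V) {N : ℕ} (hN : T^N = 0) (c : ℕ → V) :
    ∑ m ∈ Finset.range N, (T^(m+1)) (c (m+1)) = (∑ m ∈ Finset.range N, (T^m) (c m)) - c 0 := by
  have h1 : ∑ m ∈ Finset.range (N+1), (T^m) (c m)
      = (∑ m ∈ Finset.range N, (T^(m+1)) (c (m+1))) + (T^0) (c 0) :=
    Finset.sum_range_succ' (fun m => (T^m) (c m)) N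
  have h2 : ∑ m ∈ Finset.range (N+1), (T^m) (c m)
      = (∑ m ∈ Finset.range N, (T^m) (c m)) + (T^N) (c N) :=
    Finset.sum_range_succ (fun m => (T^m) (c m)) N
  rw [hN] at h2
  simp only [pow_zero, Module.End.one_apply, LinearMap.zero_apply, add_zero] at h1 h2
  rw [h2] at h1
  rw [eq_sub_iff_add_eq, ← h1]

variable (ι : Module.End k V → (HahnModule ℕ k V →ₗ[PowerSeries k] HahnModule ℕ k V))
variable (hι : ∀ (T : Module.End k V) (v : V) (i : ℕ),
      ι T (HahnModule.of k (HahnSeries.single i v)) =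
        HahnModule.of k (HahnSeries.single i (T v)) -
          HahnModule.of k (HahnSeries.single (i + 1) v))

include hι

lemma surj_aux (T : Module.End k V) {N : ℕ} (hN : T^N = 0) (x : H) :
    ∃ (w : V) (g : H), ι T g = x - HahnModule.of k (HahnSeries.single 0 w) := by
  refine ⟨∑ m ∈ Finset.range N, (T^m) (cf x m),
    mkH k (fun i => - ∑ m ∈ Finset.range N, (T^m) (cf x (i+1+m))), ?_⟩
  apply cf_ext
  intro n
  rw [iota_cf ι hι, cf_sub, cf_single]
  cases n with
  | zero =>
    simp only [if_pos rfl, sub_zero, cf_mkH, map_neg, map_sum]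
    have hc : ∀ m, T ((T^m) (cf x (0+1+m))) = (T^(m+1)) (cf x (m+1)) := by
      intro m
      have h' : 0+1+m = m+1 := by omega
      rw [h', pow_succ']
      rfl
    rw [Finset.sum_congr rfl (fun m _ => hc m), key_sum T hN (fun m => cf x m)]
    simp
  | succ j =>
    simp only [Nat.succ_ne_zero, if_neg, cf_mkH, map_neg, map_sum, Nat.add_sub_cancel]
    have hc : ∀ m, T ((T^m) (cf x (j+1+1+m))) = (T^(m+1)) (cf x (j+1+(m+1))) := by
      intro m
      have h' : j+1+1+m = j+1+(m+1) := by omega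
      rw [h', pow_succ']
      rfl
    rw [Finset.sum_congr rfl (fun m _ => hc m), key_sum T hN (fun m => cf x (j+1+m))]
    simp

lemma inj_aux (T : Module.End k V) {N : ℕ} (hN : T^N = 0) (u : V) (g : H)
    (hg : ι T g = HahnModule.of k (HahnSeries.single 0 u)) : u = 0 := by
  have hcf : ∀ n, cf (ι T g) n = cf (HahnModule.of k (HahnSeries.single 0 u)) n := by
    intro n; rw [hg]
  have h0 : T (cf g 0) = u := by
    have := hcf 0
    rw [iota_cf ι hι, cf_single] at this
    simpa using this
  have hrec : ∀ n, cf g n = T (cf g (n+1)) := by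
    intro n
    have := hcf (n+1)
    rw [iota_cf ι hι, cf_single] at this
    simp only [Nat.succ_ne_zero, if_neg, Nat.add_sub_cancel] at this
    have h1 : T (cf g (n+1)) - cf g n = 0 := by simpa using this
    exact (sub_eq_zero.mp h1).symm
  have hpow : ∀ m n, cf g n = (T^m) (cf g (n+m)) := by
    intro m
    induction m with
    | zero => intro n; simp
    | succ m ih =>
      intro n
      rw [hrec n, ih (n+1), pow_succ']
      have h' : n + 1 + m = n + (m+1) := by omega
      rw [h']
      rfl
  have hg0 : cf g 0 = 0 := by
    rw [hpow N 0, hN]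
    rfl
  rw [← h0, hg0, map_zero]

omit hι in
lemma single_sub (i : ℕ) (v v' : V) :
    HahnModule.of k (HahnSeries.single i v) - HahnModule.of k (HahnSeries.single i v')
      = HahnModule.of k (HahnSeries.single i (v - v')) := by
  apply cf_ext; intro n
  rw [cf_sub]
  simp only [cf_single]
  split <;> simp

lemma part1 (T : Module.End k V) (hT : IsNilpotent T) :
    Function.Bijective fun v : V =>
      Submodule.Quotient.mk (p := LinearMap.range (ι T))
        (HahnModule.of k (HahnSeries.single 0 v)) := by
  obtain ⟨N, hN⟩ := hT
  constructor
  · intro v v' h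
    simp only at h
    rw [Submodule.Quotient.eq, single_sub] at h
    obtain ⟨g, hg⟩ := h
    have := inj_aux ι hι T hN (v - v') g hg
    exact sub_eq_zero.mp this
  · intro y
    obtain ⟨x, rfl⟩ := Submodule.Quotient.mk_surjective _ y
    obtain ⟨w, g, hg⟩ := surj_aux ι hι T hN x
    exact ⟨w, ((Submodule.Quotient.eq (LinearMap.range (ι T))).mpr (LinearMap.mem_range.mpr ⟨g, hg⟩)).symm⟩

lemma part2 (T T' : Module.End k V) (hT : IsNilpotent T) (hT' : IsNilpotent T')
    (hr : LinearMap.range (ι T) = LinearMap.range (ι T')) : T = T' := by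
  obtain ⟨N', hN'⟩ := hT'
  ext v
  have h1 : ι T (HahnModule.of k (HahnSeries.single 0 v)) ∈ LinearMap.range (ι T') :=
    hr ▸ LinearMap.mem_range_self _ _
  have h2 : ι T' (HahnModule.of k (HahnSeries.single 0 v)) ∈ LinearMap.range (ι T') :=
    LinearMap.mem_range_self _ _
  have h3 := Submodule.sub_mem _ h1 h2
  rw [hι T v 0, hι T' v 0, sub_sub_sub_cancel_right, single_sub] at h3
  obtain ⟨g, hg⟩ := h3
  have := inj_aux ι hι T' hN' (T v - T' v) g hg
  exact sub_eq_zero.mp this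

omit hι in
lemma single_zero' (i : ℕ) : (HahnModule.of k (HahnSeries.single i (0:V))) = 0 := by
  apply cf_ext; intro n; rw [cf_single, cf_zero]; split <;> rfl

omit hι in
lemma C_smul_single (c : k) (i : ℕ) (v : V) :
    ((PowerSeries.C c : PowerSeries k)) • HahnModule.of k (HahnSeries.single i v)
      = HahnModule.of k (HahnSeries.single i (c • v)) := by
  apply cf_ext; intro n
  rw [cf_C_smul]
  simp only [cf_single]
  split <;> simp

omit hι in
lemma X_smul_single (i : ℕ) (v : V) :
    (PowerSeries.X : PowerSeries k) • HahnModule.of k (HahnSeries.single i v)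
      = HahnModule.of k (HahnSeries.single (i+1) v) := by
  apply cf_ext; intro n
  cases n with
  | zero => rw [cf_X_smul_zero, cf_single, if_neg (by omega)]
  | succ m =>
    rw [cf_X_smul_succ, cf_single, cf_single]
    by_cases h : m = i
    · rw [if_pos h, if_pos (by omega)]
    · rw [if_neg h, if_neg (by omega)]

omit hι in
lemma Xpow_smul_single (m i : ℕ) (v : V) :
    (PowerSeries.X : PowerSeries k)^m • HahnModule.of k (HahnSeries.single i v)
      = HahnModule.of k (HahnSeries.single (i+m) v) := by
  induction m with
  | zero => simp
  | succ j ih =>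
    have : (PowerSeries.X : PowerSeries k)^(j+1) = PowerSeries.X * PowerSeries.X^j := by
      rw [pow_succ']
    rw [this, mul_smul, ih, X_smul_single, show i + j + 1 = i + (j+1) from rfl]

omit hι in
lemma nat_antitone_stab (f : ℕ → ℕ) (hf : ∀ n, f (n+1) ≤ f n) : ∃ n, f (n+1) = f n := by
  by_contra h
  push_neg at h
  have hlt : ∀ n, f (n+1) < f n := fun n => lt_of_le_of_ne (hf n) (h n)
  have hb : ∀ n, f n + n ≤ f 0 := by
    intro n; induction n with
    | zero => omega
    | succ m ih => have := hlt m; omega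
  have := hb (f 0 + 1); omega

omit hι in
lemma single_add' (i : ℕ) (v v' : V) :
    HahnModule.of k (HahnSeries.single i (v + v'))
      = HahnModule.of k (HahnSeries.single i v) + HahnModule.of k (HahnSeries.single i v') := by
  apply cf_ext; intro n
  rw [cf_add]
  simp only [cf_single]
  split <;> simp

set_option maxHeartbeats 2000000 in
lemma part3 [FiniteDimensional k V] (K : Submodule (PowerSeries k) (HahnModule ℕ k V))
    (hq : Function.Bijective fun v : V =>
        Submodule.Quotient.mk (p := K) (HahnModule.of k (HahnSeries.single 0 v))) :
    ∃ T : Module.End k V, IsNilpotent T ∧ LinearMap.range (ι T) = K := by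
  classical
  set q : V → (HahnModule ℕ k V ⧸ K) := fun v =>
    Submodule.Quotient.mk (p := K) (HahnModule.of k (HahnSeries.single 0 v)) with hq_def
  have hqi : Function.Injective q := hq.1
  have hqs : Function.Surjective q := hq.2
  have q_add : ∀ v w, q (v + w) = q v + q w := by
    intro v w
    show Submodule.Quotient.mk _ = _
    rw [hq_def]
    simp only
    rw [single_add', Submodule.Quotient.mk_add]
  have q_zero : q 0 = 0 := by
    show Submodule.Quotient.mk _ = 0
    rw [Submodule.Quotient.mk_eq_zero, single_zero']
    exact K.zero_mem
  have q_smulC : ∀ (c : k) (v : V), q (c • v) = ((PowerSeries.C c : PowerSeries k)) • q v := by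
    intro c v
    show Submodule.Quotient.mk _ = _
    rw [← C_smul_single, Submodule.Quotient.mk_smul]
  choose Tf hTf using fun v => hqs ((PowerSeries.X : PowerSeries k) • q v)
  set T : Module.End k V :=
    { toFun := Tf
      map_add' := by
        intro v w
        apply hqi
        rw [q_add, hTf, hTf, hTf, q_add, smul_add]
      map_smul' := by
        intro c v
        apply hqi
        rw [RingHom.id_apply, q_smulC, hTf, hTf, q_smulC, smul_comm] } with hT_def
  have qT : ∀ v, q (T v) = (PowerSeries.X : PowerSeries k) • q v := fun v => hTf v
  have qTn : ∀ (n : ℕ) (v : V), q ((T^n) v) = ((PowerSeries.X : PowerSeries k)^n) • q v := by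
    intro n
    induction n with
    | zero => intro v; simp
    | succ m ih =>
      intro v
      have h1 : (T^(m+1)) v = (T^m) (T v) := by
        rw [pow_succ]; rfl
      rw [h1, ih, qT, ← mul_smul, ← pow_succ]
  -- generators lie in K
  have hgen : ∀ (i : ℕ) (v : V),
      HahnModule.of k (HahnSeries.single i (T v))
        - HahnModule.of k (HahnSeries.single (i+1) v) ∈ K := by
    intro i v
    have h0 : HahnModule.of k (HahnSeries.single 0 (T v))
        - HahnModule.of k (HahnSeries.single 1 v) ∈ K := by
      rw [← Submodule.Quotient.eq]
      have : (Submodule.Quotient.mk (p := K) (HahnModule.of k (HahnSeries.single 0 (T v)))) = q (T v) := rfl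
      rw [this, qT]
      rw [← X_smul_single, Submodule.Quotient.mk_smul]
    have := K.smul_mem ((PowerSeries.X : PowerSeries k)^i) h0
    rwa [smul_sub, Xpow_smul_single, Xpow_smul_single, Nat.zero_add, Nat.add_comm 1 i] at this
  -- stabilization of ranges
  have hdesc : ∀ n, LinearMap.range (T^(n+1)) ≤ LinearMap.range (T^n) := by
    intro n
    rw [pow_succ, Module.End.mul_eq_comp]
    exact LinearMap.range_comp_le_range _ _
  obtain ⟨n, hn⟩ := nat_antitone_stab
    (fun n => Module.finrank k (LinearMap.range (T^n)))
    (fun n => Submodule.finrank_mono (hdesc n))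
  have hstab : LinearMap.range (T^(n+1)) = LinearMap.range (T^n) :=
    Submodule.eq_of_le_of_finrank_eq (hdesc n) hn
  -- the quotient module is finitely generated
  have q_sum : ∀ (s : Finset (Fin (Module.finrank k V))) (g : Fin (Module.finrank k V) → V),
      q (∑ j ∈ s, g j) = ∑ j ∈ s, q (g j) := by
    intro s g
    induction s using Finset.induction_on with
    | empty => simpa using q_zero
    | insert _ _ h ih => rw [Finset.sum_insert h, Finset.sum_insert h, q_add, ih]
  have hfin : Module.Finite (PowerSeries k) (HahnModule ℕ k V ⧸ K) := by
    refine ⟨⟨Finset.image (fun j => q ((Module.finBasis k V) j)) Finset.univ, ?_⟩⟩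
    rw [Finset.coe_image, Finset.coe_univ, Set.image_univ, Submodule.eq_top_iff']
    intro m
    obtain ⟨v, rfl⟩ := hqs m
    have hv : v = ∑ j, (Module.finBasis k V).repr v j • (Module.finBasis k V) j :=
      ((Module.finBasis k V).sum_repr v).symm
    rw [hv, q_sum]
    apply Submodule.sum_mem
    intro j _
    rw [q_smulC]
    exact Submodule.smul_mem _ _ (Submodule.subset_span ⟨j, rfl⟩)
  have hnoeth : IsNoetherian (PowerSeries k) (HahnModule ℕ k V ⧸ K) :=
    isNoetherian_of_isNoetherianRing_of_finite _ _
  -- Nakayama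
  set τ : (HahnModule ℕ k V ⧸ K) →ₗ[PowerSeries k] (HahnModule ℕ k V ⧸ K) :=
    LinearMap.lsmul (PowerSeries k) _ (PowerSeries.X) with hτ_def
  have hτn : ∀ (j : ℕ) (m : HahnModule ℕ k V ⧸ K),
      (τ^j) m = ((PowerSeries.X : PowerSeries k)^j) • m := by
    intro j
    induction j with
    | zero => intro m; simp
    | succ i ih =>
      intro m
      have h1 : (τ^(i+1)) m = (τ^i) (τ m) := by rw [pow_succ]; rfl
      rw [h1, ih]
      show (PowerSeries.X : PowerSeries k)^i • ((PowerSeries.X : PowerSeries k) • m) = _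
      rw [← mul_smul, ← pow_succ]
  set N : Submodule (PowerSeries k) (HahnModule ℕ k V ⧸ K) := LinearMap.range (τ^n) with hN_def
  have hIN : N ≤ (Ideal.span {(PowerSeries.X : PowerSeries k)}) • N := by
    rintro y ⟨m, rfl⟩
    obtain ⟨v, rfl⟩ := hqs m
    rw [hτn, ← qTn]
    have hv : (T^n) v ∈ LinearMap.range (T^(n+1)) := hstab ▸ LinearMap.mem_range_self _ v
    obtain ⟨u, hu⟩ := hv
    rw [← hu, qTn (n+1) u]
    have h2 : ((PowerSeries.X : PowerSeries k)^(n+1)) • q u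
        = (PowerSeries.X : PowerSeries k) • (((PowerSeries.X : PowerSeries k)^n) • q u) := by
      rw [← mul_smul, ← pow_succ']
    rw [h2]
    exact Submodule.smul_mem_smul (Ideal.subset_span rfl)
      (LinearMap.mem_range.mpr ⟨q u, hτn n (q u)⟩)
  have hIjac : (Ideal.span {(PowerSeries.X : PowerSeries k)}) ≤ Ideal.jacobson ⊥ := by
    intro z hz
    rw [Ideal.mem_jacobson_bot]
    intro y
    rw [PowerSeries.isUnit_iff_constantCoeff]
    obtain ⟨a, ha⟩ := Ideal.mem_span_singleton'.mp hz
    rw [map_add, map_mul, ← ha, map_mul, PowerSeries.constantCoeff_X, mul_zero, zero_mul, map_one,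
      zero_add]
    exact isUnit_one
  have hNbot : N = ⊥ :=
    Submodule.eq_bot_of_le_smul_of_le_jacobson_bot _ N (IsNoetherian.noetherian N) hIN hIjac
  have hTn : T^n = 0 := by
    ext v
    apply hqi
    rw [qTn, LinearMap.zero_apply, q_zero, ← hτn]
    have : (τ^n) (q v) ∈ N := LinearMap.mem_range_self _ _
    rw [hNbot] at this
    simpa using this
  refine ⟨T, ⟨n, hTn⟩, ?_⟩
  have hle : LinearMap.range (ι T) ≤ K := by
    rintro y ⟨x, rfl⟩
    rw [← Submodule.Quotient.mk_eq_zero K]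
    have hx : ι T x = (∑ i ∈ Finset.range n,
          ι T (HahnModule.of k (HahnSeries.single i (cf x i))))
        + (PowerSeries.X : PowerSeries k)^n • ι T (mkH k fun j => cf x (n + j)) := by
      conv_lhs => rw [decomp x n]
      rw [map_add, map_smul, map_sum]
    rw [hx, Submodule.Quotient.mk_add]
    have h1 : Submodule.Quotient.mk (p := K) (∑ i ∈ Finset.range n,
        ι T (HahnModule.of k (HahnSeries.single i (cf x i)))) = 0 := by
      rw [Submodule.Quotient.mk_eq_zero]
      apply Submodule.sum_mem
      intro i _
      rw [hι]
      exact hgen i (cf x i)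
    have h2 : Submodule.Quotient.mk (p := K)
        ((PowerSeries.X : PowerSeries k)^n • ι T (mkH k fun j => cf x (n + j))) = 0 := by
      rw [Submodule.Quotient.mk_smul]
      obtain ⟨u, hu⟩ := hqs (Submodule.Quotient.mk (p := K) (ι T (mkH k fun j => cf x (n + j))))
      rw [← hu, ← qTn, hTn]
      rw [LinearMap.zero_apply, q_zero]
    rw [h1, h2, add_zero]
  apply le_antisymm hle
  intro x hx
  obtain ⟨w, g, hg⟩ := surj_aux ι hι T hTn x
  have hKg : ι T g ∈ K := hle (LinearMap.mem_range_self _ _)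
  have hw : HahnModule.of k (HahnSeries.single 0 w) ∈ K := by
    have := K.sub_mem hx hKg
    rw [hg] at this
    simpa using this
  have hw0 : w = 0 := by
    apply hqi
    rw [q_zero]
    show Submodule.Quotient.mk _ = 0
    rw [Submodule.Quotient.mk_eq_zero]
    exact hw
  refine ⟨g, ?_⟩
  rw [hg, hw0, single_zero', sub_zero]

end


/-- **Framed torsion quotients of `k⟦t⟧^d` correspond to nilpotent operators.**
Let `V` be a finite-dimensional `k`-vector space and `V⟦t⟧` the module of formal
power series with coefficients in `V` over `k⟦t⟧`.  For an endomorphism `T` of `V`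
let `ι T` be the (unique continuous) `k⟦t⟧`-linear endomorphism of `V⟦t⟧` with
`ι T (v·tⁱ) = (T v)·tⁱ − v·t^{i+1}`, and let `K_T` be its range.  Then `T ↦ K_T`
is a bijection from the set of nilpotent endomorphisms of `V` onto the set of
`k⟦t⟧`-submodules `K ⊆ V⟦t⟧` such that `v ↦ (v·t⁰ mod K)` is a bijection
(`k`-linear isomorphism) from `V` onto `V⟦t⟧/K`. -/
theorem punctual_quot_is_nilpotent_cone
    (k V : Type*) [Field k] [AddCommGroup V] [Module k V] [FiniteDimensional k V]
    (ι : Module.End k V → (HahnModule ℕ k V →ₗ[PowerSeries k] HahnModule ℕ k V))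
    (hι : ∀ (T : Module.End k V) (v : V) (i : ℕ),
      ι T (HahnModule.of k (HahnSeries.single i v)) =
        HahnModule.of k (HahnSeries.single i (T v)) -
          HahnModule.of k (HahnSeries.single (i + 1) v)) :
    -- for nilpotent `T`, the submodule `K_T` has the isomorphism property
    (∀ T : Module.End k V, IsNilpotent T →
      Function.Bijective fun v : V =>
        Submodule.Quotient.mk (p := LinearMap.range (ι T))
          (HahnModule.of k (HahnSeries.single 0 v))) ∧
    -- injectivity on nilpotent endomorphisms
    (∀ T T' : Module.End k V, IsNilpotent T → IsNilpotent T' →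
      LinearMap.range (ι T) = LinearMap.range (ι T') → T = T') ∧
    -- surjectivity onto the submodules with the isomorphism property
    (∀ K : Submodule (PowerSeries k) (HahnModule ℕ k V),
      (Function.Bijective fun v : V =>
        Submodule.Quotient.mk (p := K) (HahnModule.of k (HahnSeries.single 0 v))) →
      ∃ T : Module.End k V, IsNilpotent T ∧ LinearMap.range (ι T) = K) :=
  ⟨fun T hT => part1 ι hι T hT,
   fun T T' hT hT' h => part2 ι hι T T' hT hT' h,
   fun K hK => part3 ι hι K hK⟩
end

section
/- Let F = ℚ(t, Δ, t₁, t₂) be the field of rational functions in four indeterminates over ℚ. Define the rational function g(u) := (u − Δ)(u + t + Δ)/(u(u + t)), and for integers i, j define E(i,j) := g(t₂ − t₁)·t₁^i·t₂^j + g(t₁ − t₂)·t₁^j·t₂^i ∈ F (integer powers taken in F). For n ∈ ℕ define [i,j]_n := Σ_{k=0}^{n} (−1)^k·binom(n,k)·( E(i+k, j+n−k) − E(j+n−k, i+k) ). Then for all integers i, j the identity [i,j]_3 − (t² + Δ(t+Δ))·[i,j]_1 = t·Δ·(t+Δ)·( E(i,j) + E(j,i) ) holds in F. -/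
/-! Quadratic-type relation among the shuffle-algebra generators, in the field
`F = ℚ(t, Δ, t₁, t₂)` of rational functions in four indeterminates, with
`g(u) = (u − Δ)(u + t + Δ)/(u(u + t))` and
`E(i,j) = g(t₂−t₁)·t₁^i·t₂^j + g(t₁−t₂)·t₁^j·t₂^i`. -/

noncomputable section

/-- The field `ℚ(t, Δ, t₁, t₂)`. -/
abbrev RatField4 : Type := FractionRing (MvPolynomial (Fin 4) ℚ)

/-- The indeterminate `t`. -/
def tVar : RatField4 := algebraMap (MvPolynomial (Fin 4) ℚ) RatField4 (MvPolynomial.X 0)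

/-- The indeterminate `Δ`. -/
def ΔVar : RatField4 := algebraMap (MvPolynomial (Fin 4) ℚ) RatField4 (MvPolynomial.X 1)

/-- The indeterminate `t₁`. -/
def t₁Var : RatField4 := algebraMap (MvPolynomial (Fin 4) ℚ) RatField4 (MvPolynomial.X 2)

/-- The indeterminate `t₂`. -/
def t₂Var : RatField4 := algebraMap (MvPolynomial (Fin 4) ℚ) RatField4 (MvPolynomial.X 3)

/-- The kernel function `g(u) = (u − Δ)(u + t + Δ)/(u(u + t))`. -/
def gKer (u : RatField4) : RatField4 :=
  (u - ΔVar) * (u + tVar + ΔVar) / (u * (u + tVar))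

/-- `E(i,j) = g(t₂ − t₁)·t₁^i·t₂^j + g(t₁ − t₂)·t₁^j·t₂^i`. -/
def Egen (i j : ℤ) : RatField4 :=
  gKer (t₂Var - t₁Var) * t₁Var ^ i * t₂Var ^ j +
    gKer (t₁Var - t₂Var) * t₁Var ^ j * t₂Var ^ i

/-- `[i,j]_n = Σ_{k=0}^{n} (−1)^k·binom(n,k)·(E(i+k, j+n−k) − E(j+n−k, i+k))`. -/
def bracket (n : ℕ) (i j : ℤ) : RatField4 :=
  ∑ k ∈ Finset.range (n + 1),
    (-1 : RatField4) ^ k * (n.choose k : RatField4) *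
      (Egen (i + k) (j + n - k) - Egen (j + n - k) (i + k))

lemma algMap_ne_zero (p : MvPolynomial (Fin 4) ℚ)
    (h : MvPolynomial.eval (![5,0,1,2] : Fin 4 → ℚ) p ≠ 0) :
    algebraMap (MvPolynomial (Fin 4) ℚ) RatField4 p ≠ 0 := by
  intro h0
  apply h
  have hp : p = 0 :=
    (map_eq_zero_iff _ (IsFractionRing.injective (MvPolynomial (Fin 4) ℚ) RatField4)).mp h0
  simp [hp]

lemma ht₁ : t₁Var ≠ 0 := by
  apply algMap_ne_zero; norm_num [Matrix.cons_val_two, Matrix.cons_val_three, Matrix.vecHead, Matrix.vecTail]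

lemma ht₂ : t₂Var ≠ 0 := by
  apply algMap_ne_zero; norm_num [Matrix.cons_val_two, Matrix.cons_val_three, Matrix.vecHead, Matrix.vecTail]

lemma hba : t₂Var - t₁Var ≠ 0 := by
  have : t₂Var - t₁Var =
      algebraMap (MvPolynomial (Fin 4) ℚ) RatField4 (MvPolynomial.X 3 - MvPolynomial.X 2) := by
    simp [t₁Var, t₂Var, map_sub]
  rw [this]; apply algMap_ne_zero; norm_num [Matrix.cons_val_two, Matrix.cons_val_three, Matrix.vecHead, Matrix.vecTail]

lemma hbat : t₂Var - t₁Var + tVar ≠ 0 := by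
  have : t₂Var - t₁Var + tVar =
      algebraMap (MvPolynomial (Fin 4) ℚ) RatField4
        (MvPolynomial.X 3 - MvPolynomial.X 2 + MvPolynomial.X 0) := by
    simp [tVar, t₁Var, t₂Var, map_sub, map_add]
  rw [this]; apply algMap_ne_zero; norm_num [Matrix.cons_val_two, Matrix.cons_val_three, Matrix.vecHead, Matrix.vecTail]

lemma habt : t₁Var - t₂Var + tVar ≠ 0 := by
  have : t₁Var - t₂Var + tVar =
      algebraMap (MvPolynomial (Fin 4) ℚ) RatField4
        (MvPolynomial.X 2 - MvPolynomial.X 3 + MvPolynomial.X 0) := by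
    simp [tVar, t₁Var, t₂Var, map_sub, map_add]
  rw [this]; apply algMap_ne_zero; norm_num [Matrix.cons_val_two, Matrix.cons_val_three, Matrix.vecHead, Matrix.vecTail]

/-- The key rational-function identity in `u`, `t`, `Δ`. -/
lemma gKer_key (u : RatField4) (h1 : u ≠ 0) (h2 : u + tVar ≠ 0) (h3 : -u + tVar ≠ 0) :
    (gKer u - gKer (-u)) * (u ^ 3 - (tVar ^ 2 + ΔVar * (tVar + ΔVar)) * u) =
      tVar * ΔVar * (tVar + ΔVar) * (gKer u + gKer (-u)) := by
  have h1' : -u ≠ 0 := neg_ne_zero.mpr h1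
  have h3' : -u + tVar ≠ 0 := h3
  simp only [gKer]
  field_simp
  ring

lemma bracket3 (i j : ℤ) :
    bracket 3 i j =
      (gKer (t₂Var - t₁Var) - gKer (t₁Var - t₂Var)) * (t₂Var - t₁Var) ^ 3 *
        (t₁Var ^ i * t₂Var ^ j + t₁Var ^ j * t₂Var ^ i) := by
  simp only [bracket, Finset.sum_range_succ, Finset.sum_range_zero, Egen]
  push_cast
  norm_num [add_sub_assoc]
  simp only [zpow_add₀ ht₁, zpow_add₀ ht₂, zpow_one, zpow_ofNat]
  ring

lemma bracket1 (i j : ℤ) :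
    bracket 1 i j =
      (gKer (t₂Var - t₁Var) - gKer (t₁Var - t₂Var)) * (t₂Var - t₁Var) *
        (t₁Var ^ i * t₂Var ^ j + t₁Var ^ j * t₂Var ^ i) := by
  simp only [bracket, Finset.sum_range_succ, Finset.sum_range_zero, Egen]
  push_cast
  norm_num [add_sub_assoc]
  simp only [zpow_add₀ ht₁, zpow_add₀ ht₂, zpow_one, zpow_ofNat]
  ring

/-- **The quadratic relation**
`[i,j]₃ − (t² + Δ(t+Δ))·[i,j]₁ = t·Δ·(t+Δ)·(E(i,j) + E(j,i))` in `ℚ(t,Δ,t₁,t₂)`. -/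
theorem shuffle_quadratic_relation (i j : ℤ) :
    bracket 3 i j - (tVar ^ 2 + ΔVar * (tVar + ΔVar)) * bracket 1 i j =
      tVar * ΔVar * (tVar + ΔVar) * (Egen i j + Egen j i) := by
  have hkey := gKer_key (t₂Var - t₁Var) hba hbat (by rw [neg_sub]; exact habt)
  rw [neg_sub] at hkey
  rw [bracket3, bracket1]
  simp only [Egen]
  linear_combination (t₁Var ^ i * t₂Var ^ j + t₁Var ^ j * t₂Var ^ i) * hkey

end
end

section
/- Let F be a field and G ∈ F(x,y) a rational function in two indeterminates. For d ≥ 1 let F_d = F(t₁,…,t_d) be the rational function field in d variables with its natural S_d-action permuting the variables, and set F_0 = F. For algebraically independent elements a, b of F_d over F, write G(a,b) for the image of G under the field embedding F(x,y) → F_d determined by x ↦ a, y ↦ b. On the graded vector space A = ⊕_{d≥0} (F_d)^{S_d} define, for f ∈ (F_{d₁})^{S_{d₁}} and h ∈ (F_{d₂})^{S_{d₂}}, Ξ(f,h) := Σ_{σ ∈ Sh(d₁,d₂)} σ·( ∏_{1≤i≤d₁ < j≤d₁+d₂} G(t_i, t_j) · f(t₁,…,t_{d₁}) · h(t_{d₁+1},…,t_{d₁+d₂})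 ), where Sh(d₁,d₂) is the set of (d₁,d₂)-shuffle permutations and f, h are viewed inside F_{d₁+d₂} via the variables t₁,…,t_{d₁} and t_{d₁+1},…,t_{d₁+d₂} respectively. Then Ξ(f,h) is S_{d₁+d₂}-invariant, and Ξ is an associative product on A with unit 1 ∈ F_0, making A an associative unital graded F-algebra. -/
noncomputable section

open MvPolynomial

/-- `F_d = F(t₁, …, t_d)`: the rational function field in `d` variables over `F`,
realized as the fraction field of the polynomial ring in `d` variables. -/
abbrev RatFuncField (F : Type*) [Field F] (d : ℕ) : Type _ :=
  FractionRing (MvPolynomial (Fin d) F)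

/-- The field embedding `F_a → F_b` induced by an injective map `e` of the sets of
variables (`t_i ↦ t_{e i}`). -/
def varEmb (F : Type*) [Field F] {a b : ℕ} (e : Fin a → Fin b)
    (he : Function.Injective e) : RatFuncField F a →+* RatFuncField F b :=
  IsFractionRing.lift
    (g := (algebraMap (MvPolynomial (Fin b) F) (RatFuncField F b)).comp
      (MvPolynomial.rename e).toRingHom)
    (by
      intro x y hxy
      simp only [RingHom.comp_apply, AlgHom.toRingHom_eq_coe, RingHom.coe_coe] at hxy
      exact MvPolynomial.rename_injective e he
        (IsFractionRing.injective (MvPolynomial (Fin b) F) (RatFuncField F b) hxy))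

/-- The natural `S_d`-action on `F_d` permuting the variables. -/
def permAct (F : Type*) [Field F] {d : ℕ} (σ : Equiv.Perm (Fin d)) :
    RatFuncField F d →+* RatFuncField F d :=
  varEmb F σ σ.injective

/-- `S_d`-invariance of an element of `F_d`. -/
def SymmInvariant (F : Type*) [Field F] {d : ℕ} (f : RatFuncField F d) : Prop :=
  ∀ σ : Equiv.Perm (Fin d), permAct F σ f = f

/-- Evaluation `G(t_i, t_j)`: the image of a two-variable rational function `G ∈ F(x,y)`
under the field embedding `F(x,y) → F_d` determined by `x ↦ t_i`, `y ↦ t_j`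
(for `i ≠ j` these are algebraically independent; the diagonal value is irrelevant junk). -/
def kerEval (F : Type*) [Field F] {d : ℕ} (G : RatFuncField F 2) (i j : Fin d) :
    RatFuncField F d :=
  if h : i = j then 1
  else
    varEmb F ![i, j]
      (by
        intro a b hab
        fin_cases a <;> fin_cases b <;> simp_all)
      G

/-- The set of `(d₁,d₂)`-shuffle permutations: strictly increasing on
`{0,…,d₁-1}` and on `{d₁,…,d₁+d₂-1}`. -/
def shuffleFinset (d₁ d₂ : ℕ) : Finset (Equiv.Perm (Fin (d₁ + d₂))) :=
  Finset.univ.filter fun σ =>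
    ∀ i j : Fin (d₁ + d₂), i < j → ((j : ℕ) < d₁ ∨ d₁ ≤ (i : ℕ)) → σ i < σ j

lemma natAdd_inj (d₁ d₂ : ℕ) :
    Function.Injective (Fin.natAdd d₁ : Fin d₂ → Fin (d₁ + d₂)) := by
  intro a b hab
  have h := congrArg Fin.val hab
  simp only [Fin.coe_natAdd] at h
  exact Fin.ext (Nat.add_left_cancel h)

/-- The shuffle product
`Ξ(f,h) = Σ_{σ ∈ Sh(d₁,d₂)} σ·( ∏_{i ≤ d₁ < j} G(t_i,t_j) · f(t₁,…,t_{d₁}) ·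
h(t_{d₁+1},…,t_{d₁+d₂}) )` with kernel `G`. -/
def shuffleMul (F : Type*) [Field F] (G : RatFuncField F 2) {d₁ d₂ : ℕ}
    (f : RatFuncField F d₁) (h : RatFuncField F d₂) : RatFuncField F (d₁ + d₂) :=
  ∑ σ ∈ shuffleFinset d₁ d₂,
    permAct F σ
      ((∏ i : Fin d₁, ∏ j : Fin d₂,
          kerEval F G (Fin.castAdd d₂ i) (Fin.natAdd d₁ j)) *
        varEmb F (Fin.castAdd d₂) (Fin.castAdd_injective _ _) f *
        varEmb F (Fin.natAdd d₁) (natAdd_inj _ _) h)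

/-- The scalar `c ∈ F`, viewed inside `F_d`. -/
def constEmb (F : Type*) [Field F] (d : ℕ) (c : F) : RatFuncField F d :=
  algebraMap (MvPolynomial (Fin d) F) (RatFuncField F d) (MvPolynomial.C c)

section Infra

open Equiv Finset Function

variable (F : Type*) [Field F]

lemma varEmb_algebraMap {a b : ℕ} (e : Fin a → Fin b) (he : Function.Injective e)
    (p : MvPolynomial (Fin a) F) :
    varEmb F e he (algebraMap _ (RatFuncField F a) p) =
      algebraMap _ (RatFuncField F b) (MvPolynomial.rename e p) := by
  simp [varEmb, IsFractionRing.lift_algebraMap]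

lemma varEmb_comp_apply {a b c : ℕ} (e₁ : Fin b → Fin c) (he₁ : Function.Injective e₁)
    (e₂ : Fin a → Fin b) (he₂ : Function.Injective e₂) (f : RatFuncField F a) :
    varEmb F e₁ he₁ (varEmb F e₂ he₂ f) = varEmb F (e₁ ∘ e₂) (he₁.comp he₂) f := by
  have : (varEmb F e₁ he₁).comp (varEmb F e₂ he₂) = varEmb F (e₁ ∘ e₂) (he₁.comp he₂) := by
    apply IsLocalization.ringHom_ext (nonZeroDivisors (MvPolynomial (Fin a) F))
    refine RingHom.ext fun p => ?_
    simp only [RingHom.comp_apply]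
    rw [varEmb_algebraMap, varEmb_algebraMap, varEmb_algebraMap, MvPolynomial.rename_rename]
  exact congrFun (congrArg (fun g => g.toFun) this) f

lemma varEmb_congr {a b : ℕ} {e e' : Fin a → Fin b} (he : Function.Injective e)
    (he' : Function.Injective e') (h : e = e') (f : RatFuncField F a) :
    varEmb F e he f = varEmb F e' he' f := by subst h; rfl

lemma varEmb_id {a : ℕ} (e : Fin a → Fin a) (he : Function.Injective e)
    (h : ∀ i, e i = i) (f : RatFuncField F a) : varEmb F e he f = f := by
  have h' : e = id := funext h
  subst h'
  have : varEmb F (id : Fin a → Fin a) he = RingHom.id _ := by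
    apply IsLocalization.ringHom_ext (nonZeroDivisors (MvPolynomial (Fin a) F))
    refine RingHom.ext fun p => ?_
    simp only [RingHom.comp_apply, RingHom.id_apply]
    rw [varEmb_algebraMap, MvPolynomial.rename_id, AlgHom.id_apply]
  rw [this]; rfl

lemma permAct_permAct {d : ℕ} (σ τ : Equiv.Perm (Fin d)) (f : RatFuncField F d) :
    permAct F σ (permAct F τ f) = permAct F (σ * τ) f := by
  rw [permAct, permAct, permAct, varEmb_comp_apply]
  exact varEmb_congr F _ _ rfl f

lemma kerEval_map (G : RatFuncField F 2) {a b : ℕ} (e : Fin a → Fin b)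
    (he : Function.Injective e) (i j : Fin a) :
    varEmb F e he (kerEval F G i j) = kerEval F G (e i) (e j) := by
  by_cases h : i = j
  · subst h; simp [kerEval]
  · have h' : e i ≠ e j := fun hc => h (he hc)
    rw [kerEval, kerEval, dif_neg h, dif_neg h']
    refine (varEmb_comp_apply F e he _ _ G).trans ?_
    apply varEmb_congr
    funext k
    fin_cases k <;> simp

lemma varEmb_constEmb {a b : ℕ} (e : Fin a → Fin b) (he : Function.Injective e) (c : F) :
    varEmb F e he (constEmb F a c) = constEmb F b c := by
  rw [constEmb, varEmb_algebraMap]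
  simp [constEmb]

end Infra
section Comb

open Equiv Finset Function

lemma mem_shuffleFinset_iff {d₁ d₂ : ℕ} (σ : Equiv.Perm (Fin (d₁ + d₂))) :
    σ ∈ shuffleFinset d₁ d₂ ↔
      (StrictMono fun i : Fin d₁ => σ (Fin.castAdd d₂ i)) ∧
      (StrictMono fun j : Fin d₂ => σ (Fin.natAdd d₁ j)) := by
  simp only [shuffleFinset, Finset.mem_filter, Finset.mem_univ, true_and]
  constructor
  · intro H
    constructor
    · intro i j hij
      exact H _ _ (by simpa only [Fin.lt_def, Fin.coe_castAdd] using hij)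
        (Or.inl (by simpa using j.isLt))
    · intro i j hij
      exact H _ _ (by simp only [Fin.lt_def, Fin.coe_natAdd]; omega) (Or.inr (by simp))
  · rintro ⟨H₁, H₂⟩ i j hij hd
    rcases hd with hd | hd
    · have hi : (i : ℕ) < d₁ := lt_trans hij hd
      have : σ (Fin.castAdd d₂ ⟨i, hi⟩) < σ (Fin.castAdd d₂ ⟨j, hd⟩) := H₁ (by simpa using hij)
      simpa [Fin.castAdd, Fin.castLE, Fin.ext_iff] using this
    · have hj : d₁ ≤ (j : ℕ) := le_trans hd (le_of_lt hij)
      have hi2 : (i : ℕ) - d₁ < d₂ := by omega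
      have hj2 : (j : ℕ) - d₁ < d₂ := by omega
      have : σ (Fin.natAdd d₁ ⟨(i : ℕ) - d₁, hi2⟩) < σ (Fin.natAdd d₁ ⟨(j : ℕ) - d₁, hj2⟩) := by
        apply H₂; simp [Fin.lt_def]; omega
      have e1 : Fin.natAdd d₁ ⟨(i : ℕ) - d₁, hi2⟩ = i := by simp [Fin.ext_iff]; omega
      have e2 : Fin.natAdd d₁ ⟨(j : ℕ) - d₁, hj2⟩ = j := by simp [Fin.ext_iff]; omega
      rwa [e1, e2] at this

/-- The block permutation `ρ₁ ⊕ ρ₂` of `Fin (d₁ + d₂)`. -/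
def blockPerm {d₁ d₂ : ℕ} (ρ₁ : Equiv.Perm (Fin d₁)) (ρ₂ : Equiv.Perm (Fin d₂)) :
    Equiv.Perm (Fin (d₁ + d₂)) :=
  finSumFinEquiv.permCongr (Equiv.sumCongr ρ₁ ρ₂)

@[simp] lemma blockPerm_castAdd {d₁ d₂ : ℕ} (ρ₁ : Equiv.Perm (Fin d₁))
    (ρ₂ : Equiv.Perm (Fin d₂)) (i : Fin d₁) :
    blockPerm ρ₁ ρ₂ (Fin.castAdd d₂ i) = Fin.castAdd d₂ (ρ₁ i) := by
  simp [blockPerm, Equiv.permCongr_apply]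

@[simp] lemma blockPerm_natAdd {d₁ d₂ : ℕ} (ρ₁ : Equiv.Perm (Fin d₁))
    (ρ₂ : Equiv.Perm (Fin d₂)) (j : Fin d₂) :
    blockPerm ρ₁ ρ₂ (Fin.natAdd d₁ j) = Fin.natAdd d₁ (ρ₂ j) := by
  simp [blockPerm, Equiv.permCongr_apply]

/-- Any permutation decomposes as a shuffle times a block permutation. -/
lemma exists_shuffle_decomp {d₁ d₂ : ℕ} (π : Equiv.Perm (Fin (d₁ + d₂))) :
    ∃ σ ∈ shuffleFinset d₁ d₂, ∃ ρ₁ ρ₂, π = σ * blockPerm ρ₁ ρ₂ := by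
  have hinj : Function.Injective π := π.injective
  set ρ₁ := Tuple.sort (fun i : Fin d₁ => π (Fin.castAdd d₂ i)) with hρ₁
  set ρ₂ := Tuple.sort (fun j : Fin d₂ => π (Fin.natAdd d₁ j)) with hρ₂
  refine ⟨π * blockPerm ρ₁ ρ₂, ?_, ρ₁⁻¹, ρ₂⁻¹, ?_⟩
  · rw [mem_shuffleFinset_iff]
    constructor
    · have hm := Tuple.monotone_sort (fun i : Fin d₁ => π (Fin.castAdd d₂ i))
      refine Monotone.strictMono_of_injective ?_ ?_
      · intro i j hij
        simpa [Equiv.Perm.mul_apply] using hm hij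
      · intro i j hij
        simp only [Equiv.Perm.mul_apply, blockPerm_castAdd] at hij
        exact ρ₁.injective (Fin.castAdd_injective _ _ (hinj hij))
    · have hm := Tuple.monotone_sort (fun j : Fin d₂ => π (Fin.natAdd d₁ j))
      refine Monotone.strictMono_of_injective ?_ ?_
      · intro i j hij
        simpa [Equiv.Perm.mul_apply] using hm hij
      · intro i j hij
        simp only [Equiv.Perm.mul_apply, blockPerm_natAdd] at hij
        exact ρ₂.injective (natAdd_inj _ _ (hinj hij))
  · have : blockPerm ρ₁ ρ₂ * blockPerm ρ₁⁻¹ ρ₂⁻¹ = 1 := by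
      apply Equiv.ext
      intro x
      induction x using Fin.addCases with
      | left i => simp
      | right j => simp
    rw [mul_assoc, this, mul_one]

/-- Uniqueness of the shuffle part. -/
lemma shuffle_decomp_unique {d₁ d₂ : ℕ} {σ σ' : Equiv.Perm (Fin (d₁ + d₂))}
    (hσ : σ ∈ shuffleFinset d₁ d₂) (hσ' : σ' ∈ shuffleFinset d₁ d₂)
    {ρ₁ ρ₂} (h : σ * blockPerm ρ₁ ρ₂ = σ') : σ = σ' := by
  rw [mem_shuffleFinset_iff] at hσ hσ'
  have hc : (fun i : Fin d₁ => σ (Fin.castAdd d₂ i)) =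
      fun i : Fin d₁ => σ' (Fin.castAdd d₂ i) := by
    apply (StrictMono.range_inj hσ.1 hσ'.1).mp
    ext y
    constructor
    · rintro ⟨i, rfl⟩
      refine ⟨ρ₁⁻¹ i, ?_⟩
      rw [← h]; simp [Equiv.Perm.mul_apply]
    · rintro ⟨i, rfl⟩
      refine ⟨ρ₁ i, ?_⟩
      rw [← h]; simp [Equiv.Perm.mul_apply]
  have hn : (fun j : Fin d₂ => σ (Fin.natAdd d₁ j)) =
      fun j : Fin d₂ => σ' (Fin.natAdd d₁ j) := by
    apply (StrictMono.range_inj hσ.2 hσ'.2).mp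
    ext y
    constructor
    · rintro ⟨j, rfl⟩
      refine ⟨ρ₂⁻¹ j, ?_⟩
      rw [← h]; simp [Equiv.Perm.mul_apply]
    · rintro ⟨j, rfl⟩
      refine ⟨ρ₂ j, ?_⟩
      rw [← h]; simp [Equiv.Perm.mul_apply]
  apply Equiv.ext
  intro x
  induction x using Fin.addCases with
  | left i => exact congrFun hc i
  | right j => exact congrFun hn j

end Comb
section Decomp

open Equiv Finset Function

lemma blockPerm_mul {d₁ d₂ : ℕ} (ρ₁ τ₁ : Equiv.Perm (Fin d₁)) (ρ₂ τ₂ : Equiv.Perm (Fin d₂)) :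
    blockPerm ρ₁ ρ₂ * blockPerm τ₁ τ₂ = blockPerm (ρ₁ * τ₁) (ρ₂ * τ₂) := by
  apply Equiv.ext
  intro x
  induction x using Fin.addCases with
  | left i => simp [Equiv.Perm.mul_apply]
  | right j => simp [Equiv.Perm.mul_apply]

lemma blockPerm_one {d₁ d₂ : ℕ} :
    (blockPerm (1 : Equiv.Perm (Fin d₁)) (1 : Equiv.Perm (Fin d₂))) = 1 := by
  apply Equiv.ext
  intro x
  induction x using Fin.addCases with
  | left i => simp
  | right j => simp

lemma blockPerm_inv {d₁ d₂ : ℕ} (ρ₁ : Equiv.Perm (Fin d₁)) (ρ₂ : Equiv.Perm (Fin d₂)) :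
    (blockPerm ρ₁ ρ₂)⁻¹ = blockPerm ρ₁⁻¹ ρ₂⁻¹ := by
  apply inv_eq_of_mul_eq_one_right
  rw [blockPerm_mul]
  simp [blockPerm_one]

lemma shuffle_decomp_unique' {d₁ d₂ : ℕ} {σ σ' : Equiv.Perm (Fin (d₁ + d₂))}
    (hσ : σ ∈ shuffleFinset d₁ d₂) (hσ' : σ' ∈ shuffleFinset d₁ d₂)
    {ρ₁ ρ₂ ρ₁' ρ₂'} (h : σ * blockPerm ρ₁ ρ₂ = σ' * blockPerm ρ₁' ρ₂') : σ = σ' := by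
  apply shuffle_decomp_unique hσ hσ' (ρ₁ := ρ₁ * ρ₁'⁻¹) (ρ₂ := ρ₂ * ρ₂'⁻¹)
  rw [← blockPerm_mul, ← mul_assoc, h, mul_assoc, ← blockPerm_inv, mul_inv_cancel, mul_one]

/-- The canonical shuffle coset representative of `π`. -/
def shufflePart {d₁ d₂ : ℕ} (π : Equiv.Perm (Fin (d₁ + d₂))) : Equiv.Perm (Fin (d₁ + d₂)) :=
  Classical.choose (exists_shuffle_decomp π)

lemma shufflePart_mem {d₁ d₂ : ℕ} (π : Equiv.Perm (Fin (d₁ + d₂))) :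
    shufflePart π ∈ shuffleFinset d₁ d₂ :=
  (Classical.choose_spec (exists_shuffle_decomp π)).1

lemma shufflePart_decomp {d₁ d₂ : ℕ} (π : Equiv.Perm (Fin (d₁ + d₂))) :
    ∃ ρ₁ ρ₂, π = shufflePart π * blockPerm ρ₁ ρ₂ :=
  (Classical.choose_spec (exists_shuffle_decomp π)).2

set_option synthInstance.maxHeartbeats 400000 in
/-- Symmetrizing over shuffles of a block-invariant element produces an invariant element. -/
lemma sum_permAct_shuffle_invariant (F : Type*) [Field F] {d₁ d₂ : ℕ}
    (x : RatFuncField F (d₁ + d₂))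
    (hx : ∀ (ρ₁ : Equiv.Perm (Fin d₁)) (ρ₂ : Equiv.Perm (Fin d₂)),
      permAct F (blockPerm ρ₁ ρ₂) x = x)
    (τ : Equiv.Perm (Fin (d₁ + d₂))) :
    permAct F τ (∑ σ ∈ shuffleFinset d₁ d₂, permAct F σ x) =
      ∑ σ ∈ shuffleFinset d₁ d₂, permAct F σ x := by
  rw [map_sum]
  refine Finset.sum_nbij (fun σ => shufflePart (τ * σ)) ?_ ?_ ?_ ?_
  · intro σ _
    exact shufflePart_mem _
  · intro σ hσ σ' hσ' hEq
    simp only [Finset.mem_coe] at hσ hσ'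
    simp only [] at hEq
    obtain ⟨ρ₁, ρ₂, hd⟩ := shufflePart_decomp (τ * σ)
    obtain ⟨ρ₁', ρ₂', hd'⟩ := shufflePart_decomp (τ * σ')
    rw [show shufflePart (τ * σ) = shufflePart (τ * σ') from hEq] at hd
    have e1 : σ = τ⁻¹ * (shufflePart (τ * σ') * blockPerm ρ₁ ρ₂) := by
      rw [← hd]; group
    have e2 : σ' = τ⁻¹ * (shufflePart (τ * σ') * blockPerm ρ₁' ρ₂') := by
      rw [← hd']; group
    have l1 : σ * (blockPerm ρ₁ ρ₂)⁻¹ = τ⁻¹ * shufflePart (τ * σ') := by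
      conv_lhs => rw [e1]
      group
    have l2 : σ' * (blockPerm ρ₁' ρ₂')⁻¹ = τ⁻¹ * shufflePart (τ * σ') := by
      conv_lhs => rw [e2]
      group
    refine shuffle_decomp_unique' hσ hσ'
      (ρ₁ := ρ₁⁻¹) (ρ₂ := ρ₂⁻¹) (ρ₁' := ρ₁'⁻¹) (ρ₂' := ρ₂'⁻¹) ?_
    rw [← blockPerm_inv, ← blockPerm_inv, l1, l2]
  · intro σ'' hσ''
    simp only [Finset.mem_coe] at hσ''
    refine ⟨shufflePart (τ⁻¹ * σ''), by simp only [Finset.mem_coe]; exact shufflePart_mem _, ?_⟩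
    show shufflePart (τ * shufflePart (τ⁻¹ * σ'')) = σ''
    set σ₀ := shufflePart (τ⁻¹ * σ'') with hσ₀
    obtain ⟨ρ₁, ρ₂, hd⟩ := shufflePart_decomp (τ⁻¹ * σ'')
    rw [← hσ₀] at hd
    obtain ⟨ρ₁', ρ₂', hd'⟩ := shufflePart_decomp (τ * σ₀)
    have key : shufflePart (τ * σ₀) * blockPerm ρ₁' ρ₂' = σ'' * blockPerm ρ₁⁻¹ ρ₂⁻¹ := by
      rw [← blockPerm_inv, ← hd', eq_mul_inv_iff_mul_eq, mul_assoc, ← hd]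
      group
    exact shuffle_decomp_unique' (shufflePart_mem _) hσ'' key
  · intro σ hσ
    rw [permAct_permAct]
    obtain ⟨ρ₁, ρ₂, hd⟩ := shufflePart_decomp (τ * σ)
    conv_lhs => rw [hd]
    rw [← permAct_permAct, hx]

end Decomp
section Easy

open Equiv Finset Function

set_option synthInstance.maxHeartbeats 400000 in
lemma integrand_blockInv (F : Type*) [Field F] (G : RatFuncField F 2) {d₁ d₂ : ℕ}
    (f : RatFuncField F d₁) (h : RatFuncField F d₂)
    (hf : SymmInvariant F f) (hh : SymmInvariant F h)
    (ρ₁ : Equiv.Perm (Fin d₁)) (ρ₂ : Equiv.Perm (Fin d₂)) :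
    permAct F (blockPerm ρ₁ ρ₂)
      ((∏ i : Fin d₁, ∏ j : Fin d₂,
          kerEval F G (Fin.castAdd d₂ i) (Fin.natAdd d₁ j)) *
        varEmb F (Fin.castAdd d₂) (Fin.castAdd_injective _ _) f *
        varEmb F (Fin.natAdd d₁) (natAdd_inj _ _) h) =
      (∏ i : Fin d₁, ∏ j : Fin d₂,
          kerEval F G (Fin.castAdd d₂ i) (Fin.natAdd d₁ j)) *
        varEmb F (Fin.castAdd d₂) (Fin.castAdd_injective _ _) f *
        varEmb F (Fin.natAdd d₁) (natAdd_inj _ _) h := by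
  rw [map_mul, map_mul]
  congr 1
  · congr 1
    · rw [map_prod]
      have step1 : ∀ i : Fin d₁,
          permAct F (blockPerm ρ₁ ρ₂) (∏ j : Fin d₂,
            kerEval F G (Fin.castAdd d₂ i) (Fin.natAdd d₁ j)) =
          ∏ j : Fin d₂, kerEval F G (Fin.castAdd d₂ (ρ₁ i)) (Fin.natAdd d₁ j) := by
        intro i
        rw [map_prod]
        rw [← Equiv.prod_comp ρ₂ (fun j => kerEval F G (Fin.castAdd d₂ (ρ₁ i)) (Fin.natAdd d₁ j))]
        apply Finset.prod_congr rfl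
        intro j _
        rw [permAct, kerEval_map, blockPerm_castAdd, blockPerm_natAdd]
      calc ∏ i : Fin d₁, permAct F (blockPerm ρ₁ ρ₂) (∏ j : Fin d₂,
              kerEval F G (Fin.castAdd d₂ i) (Fin.natAdd d₁ j))
          = ∏ i : Fin d₁, ∏ j : Fin d₂,
              kerEval F G (Fin.castAdd d₂ (ρ₁ i)) (Fin.natAdd d₁ j) :=
            Finset.prod_congr rfl fun i _ => step1 i
        _ = _ := Equiv.prod_comp ρ₁ (fun i => ∏ j : Fin d₂,
              kerEval F G (Fin.castAdd d₂ i) (Fin.natAdd d₁ j))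
    · rw [permAct, varEmb_comp_apply]
      rw [varEmb_congr F _ (Function.Injective.comp (Fin.castAdd_injective _ _) ρ₁.injective)
        (h := funext fun i => by simp [Function.comp]) (f := f)]
      rw [← varEmb_comp_apply F _ (Fin.castAdd_injective _ _) _ ρ₁.injective]
      rw [show varEmb F (⇑ρ₁) ρ₁.injective f = f from hf ρ₁]
  · rw [permAct, varEmb_comp_apply]
    rw [varEmb_congr F _ (Function.Injective.comp (natAdd_inj _ _) ρ₂.injective)
      (h := funext fun j => by simp [Function.comp]) (f := h)]
    rw [← varEmb_comp_apply F _ (natAdd_inj _ _) _ ρ₂.injective]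
    rw [show varEmb F (⇑ρ₂) ρ₂.injective h = h from hh ρ₂]

lemma shuffleMul_invariant (F : Type*) [Field F] (G : RatFuncField F 2) {d₁ d₂ : ℕ}
    (f : RatFuncField F d₁) (h : RatFuncField F d₂)
    (hf : SymmInvariant F f) (hh : SymmInvariant F h) :
    SymmInvariant F (shuffleMul F G f h) := by
  intro τ
  exact sum_permAct_shuffle_invariant F _ (integrand_blockInv F G f h hf hh) τ

end Easy
section Units

open Equiv Finset Function

lemma strictMono_perm_eq_one {n : ℕ} (σ : Equiv.Perm (Fin n)) (h : StrictMono σ) : σ = 1 := by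
  have : ⇑σ = id := by
    apply (StrictMono.range_inj h strictMono_id).mp
    rw [Set.range_id]
    exact Set.range_eq_univ.mpr σ.surjective
  apply Equiv.ext
  intro x
  exact congrFun this x

lemma shuffleFinset_right_zero (d : ℕ) : shuffleFinset d 0 = {1} := by
  ext σ
  rw [mem_shuffleFinset_iff, Finset.mem_singleton]
  constructor
  · rintro ⟨h1, -⟩
    apply strictMono_perm_eq_one
    have : (fun i : Fin d => σ (Fin.castAdd 0 i)) = ⇑σ := by
      funext i; congr 1
    rwa [this] at h1
  · rintro rfl
    exact ⟨fun i j hij => by simpa using hij, fun i j hij => i.elim0⟩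

lemma shuffleFinset_left_zero (d : ℕ) : shuffleFinset 0 d = {1} := by
  ext σ
  rw [mem_shuffleFinset_iff, Finset.mem_singleton]
  constructor
  · rintro ⟨-, h2⟩
    have hsur : Function.Surjective (Fin.natAdd 0 : Fin d → Fin (0 + d)) := by
      intro x
      exact ⟨⟨x.1, by omega⟩, by simp [Fin.ext_iff]⟩
    have hsm : StrictMono (Fin.natAdd 0 : Fin d → Fin (0 + d)) := by
      intro i j hij
      rw [Fin.lt_def] at hij ⊢
      simpa using hij
    have : (fun j : Fin d => σ (Fin.natAdd 0 j)) = (Fin.natAdd 0 : Fin d → Fin (0 + d)) := by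
      apply (StrictMono.range_inj h2 hsm).mp
      ext y
      constructor
      · rintro ⟨j, rfl⟩
        exact hsur (σ (Fin.natAdd 0 j))
      · rintro ⟨j, rfl⟩
        obtain ⟨j', hj'⟩ := hsur (σ⁻¹ (Fin.natAdd 0 j))
        refine ⟨j', ?_⟩
        show σ (Fin.natAdd 0 j') = Fin.natAdd 0 j
        rw [hj']
        simp
    apply Equiv.ext
    intro x
    obtain ⟨j, rfl⟩ := hsur x
    exact congrFun this j
  · rintro rfl
    exact ⟨fun i j hij => i.elim0, fun i j hij => by
      simp only [Equiv.Perm.one_apply]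
      rw [Fin.lt_def] at hij ⊢
      simpa using hij⟩

lemma permAct_one (F : Type*) [Field F] {d : ℕ} (f : RatFuncField F d) :
    permAct F 1 f = f :=
  varEmb_id F _ _ (fun _ => rfl) f

set_option synthInstance.maxHeartbeats 400000 in
lemma shuffleMul_one_right (F : Type*) [Field F] (G : RatFuncField F 2) {d : ℕ}
    (f : RatFuncField F d) : shuffleMul F G f (1 : RatFuncField F 0) = f := by
  rw [shuffleMul, shuffleFinset_right_zero, Finset.sum_singleton, permAct_one]
  rw [map_one]
  have h1 : (∏ i : Fin d, ∏ j : Fin 0,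
      kerEval F G (Fin.castAdd 0 i) (Fin.natAdd d j)) = 1 := by
    simp
  rw [h1, one_mul, mul_one]
  exact varEmb_id F _ _ (fun i => rfl) f

set_option synthInstance.maxHeartbeats 400000 in
lemma shuffleMul_one_left (F : Type*) [Field F] (G : RatFuncField F 2) {d : ℕ}
    (f : RatFuncField F d) :
    varEmb F (finCongr (Nat.zero_add d)) (finCongr (Nat.zero_add d)).injective
      (shuffleMul F G (1 : RatFuncField F 0) f) = f := by
  rw [shuffleMul, shuffleFinset_left_zero, Finset.sum_singleton, permAct_one]
  rw [map_one]
  have h1 : (∏ i : Fin 0, ∏ j : Fin d,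
      kerEval F G (Fin.castAdd d i) (Fin.natAdd 0 j)) = 1 := by
    simp
  rw [h1, one_mul, one_mul, varEmb_comp_apply]
  exact varEmb_id F _ _ (fun j => by simp [Function.comp, Fin.ext_iff]) f

set_option synthInstance.maxHeartbeats 400000 in
lemma shuffleMul_add_left (F : Type*) [Field F] (G : RatFuncField F 2) {d₁ d₂ : ℕ}
    (f f' : RatFuncField F d₁) (h : RatFuncField F d₂) :
    shuffleMul F G (f + f') h = shuffleMul F G f h + shuffleMul F G f' h := by
  rw [shuffleMul, shuffleMul, shuffleMul, ← Finset.sum_add_distrib]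
  apply Finset.sum_congr rfl
  intro σ _
  rw [map_add, mul_add, add_mul, map_add]

set_option synthInstance.maxHeartbeats 400000 in
lemma shuffleMul_add_right (F : Type*) [Field F] (G : RatFuncField F 2) {d₁ d₂ : ℕ}
    (f : RatFuncField F d₁) (h h' : RatFuncField F d₂) :
    shuffleMul F G f (h + h') = shuffleMul F G f h + shuffleMul F G f h' := by
  rw [shuffleMul, shuffleMul, shuffleMul, ← Finset.sum_add_distrib]
  apply Finset.sum_congr rfl
  intro σ _
  rw [map_add, mul_add, map_add]

lemma permAct_constEmb (F : Type*) [Field F] {d : ℕ} (σ : Equiv.Perm (Fin d)) (c : F) :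
    permAct F σ (constEmb F d c) = constEmb F d c :=
  varEmb_constEmb F _ _ c

set_option synthInstance.maxHeartbeats 400000 in
lemma shuffleMul_smul_left (F : Type*) [Field F] (G : RatFuncField F 2) {d₁ d₂ : ℕ}
    (c : F) (f : RatFuncField F d₁) (h : RatFuncField F d₂) :
    shuffleMul F G (constEmb F d₁ c * f) h =
      constEmb F (d₁ + d₂) c * shuffleMul F G f h := by
  rw [shuffleMul, shuffleMul, Finset.mul_sum]
  apply Finset.sum_congr rfl
  intro σ _
  rw [map_mul (varEmb F (Fin.castAdd d₂) (Fin.castAdd_injective _ _)), varEmb_constEmb]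
  rw [show ∀ K a b : RatFuncField F (d₁ + d₂), K * (constEmb F (d₁ + d₂) c * a) * b =
    constEmb F (d₁ + d₂) c * (K * a * b) from fun K a b => by ring]
  rw [map_mul, permAct_constEmb]

set_option synthInstance.maxHeartbeats 400000 in
lemma shuffleMul_smul_right (F : Type*) [Field F] (G : RatFuncField F 2) {d₁ d₂ : ℕ}
    (c : F) (f : RatFuncField F d₁) (h : RatFuncField F d₂) :
    shuffleMul F G f (constEmb F d₂ c * h) =
      constEmb F (d₁ + d₂) c * shuffleMul F G f h := by
  rw [shuffleMul, shuffleMul, Finset.mul_sum]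
  apply Finset.sum_congr rfl
  intro σ _
  rw [map_mul (varEmb F (Fin.natAdd d₁) (natAdd_inj _ _)), varEmb_constEmb]
  rw [show ∀ K a b : RatFuncField F (d₁ + d₂), K * a * (constEmb F (d₁ + d₂) c * b) =
    constEmb F (d₁ + d₂) c * (K * a * b) from fun K a b => by ring]
  rw [map_mul, permAct_constEmb]

end Units
section Assoc3

open Equiv Finset Function

/-- Triple shuffles of `Fin (d₁ + (d₂ + d₃))`. -/
def shuffle3 (d₁ d₂ d₃ : ℕ) : Finset (Equiv.Perm (Fin (d₁ + (d₂ + d₃)))) :=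
  @Finset.filter _ (fun π =>
    (StrictMono fun i : Fin d₁ => π (Fin.castAdd (d₂ + d₃) i)) ∧
    (StrictMono fun j : Fin d₂ => π (Fin.natAdd d₁ (Fin.castAdd d₃ j))) ∧
    (StrictMono fun k : Fin d₃ => π (Fin.natAdd d₁ (Fin.natAdd d₂ k))))
    (Classical.decPred _) Finset.univ

lemma mem_shuffle3_iff {d₁ d₂ d₃ : ℕ} (π : Equiv.Perm (Fin (d₁ + (d₂ + d₃)))) :
    π ∈ shuffle3 d₁ d₂ d₃ ↔
      (StrictMono fun i : Fin d₁ => π (Fin.castAdd (d₂ + d₃) i)) ∧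
      (StrictMono fun j : Fin d₂ => π (Fin.natAdd d₁ (Fin.castAdd d₃ j))) ∧
      (StrictMono fun k : Fin d₃ => π (Fin.natAdd d₁ (Fin.natAdd d₂ k))) := by
  simp [shuffle3, Finset.mem_filter]

/-- The right-hand-side bijection sum. -/
lemma sumR {d₁ d₂ d₃ : ℕ} {M : Type*} [AddCommMonoid M]
    (g : Equiv.Perm (Fin (d₁ + (d₂ + d₃))) → M) :
    ∑ τ ∈ shuffleFinset d₁ (d₂ + d₃), ∑ σ ∈ shuffleFinset d₂ d₃,
      g (τ * blockPerm (1 : Equiv.Perm (Fin d₁)) σ) = ∑ π ∈ shuffle3 d₁ d₂ d₃, g π := by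
  rw [← Finset.sum_product']
  refine Finset.sum_nbij (fun p => p.1 * blockPerm 1 p.2) ?_ ?_ ?_ ?_
  · rintro ⟨τ, σ⟩ hp
    rw [Finset.mem_product] at hp
    obtain ⟨hτ, hσ⟩ := hp
    rw [mem_shuffleFinset_iff] at hτ hσ
    rw [mem_shuffle3_iff]
    refine ⟨?_, ?_, ?_⟩
    · have : (fun i : Fin d₁ => (τ * blockPerm (1 : Equiv.Perm (Fin d₁)) σ) (Fin.castAdd (d₂ + d₃) i)) =
        fun i => τ (Fin.castAdd (d₂ + d₃) i) := by
        funext i; simp [Equiv.Perm.mul_apply]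
      rw [this]; exact hτ.1
    · have : (fun j : Fin d₂ => (τ * blockPerm (1 : Equiv.Perm (Fin d₁)) σ) (Fin.natAdd d₁ (Fin.castAdd d₃ j))) =
        fun j => τ (Fin.natAdd d₁ (σ (Fin.castAdd d₃ j))) := by
        funext j; simp [Equiv.Perm.mul_apply]
      rw [this]; exact hτ.2.comp hσ.1
    · have : (fun k : Fin d₃ => (τ * blockPerm (1 : Equiv.Perm (Fin d₁)) σ) (Fin.natAdd d₁ (Fin.natAdd d₂ k))) =
        fun k => τ (Fin.natAdd d₁ (σ (Fin.natAdd d₂ k))) := by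
        funext k; simp [Equiv.Perm.mul_apply]
      rw [this]; exact hτ.2.comp hσ.2
  · rintro ⟨τ, σ⟩ hp ⟨τ', σ'⟩ hp' hEq
    simp only [Finset.mem_coe, Finset.mem_product] at hp hp'
    simp only [] at hEq
    have hτEq : τ = τ' :=
      shuffle_decomp_unique' hp.1 hp'.1 hEq
    have hbp : blockPerm (1 : Equiv.Perm (Fin d₁)) σ = blockPerm 1 σ' := by
      rw [hτEq] at hEq
      exact mul_left_cancel hEq
    have hσEq : σ = σ' := by
      apply Equiv.ext
      intro j
      have := congrArg (fun p => p (Fin.natAdd d₁ j)) hbp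
      simp only [blockPerm_natAdd] at this
      exact natAdd_inj _ _ this
    rw [Prod.ext_iff]
    exact ⟨hτEq, hσEq⟩
  · intro π hπ
    simp only [Finset.mem_coe, mem_shuffle3_iff] at hπ
    obtain ⟨h1, h2, h3⟩ := hπ
    obtain ⟨ρ₁, ρ₂, hd⟩ := shufflePart_decomp π
    have hτ := shufflePart_mem π
    have hτ' := hτ
    rw [mem_shuffleFinset_iff] at hτ'
    have hρ₁ : ρ₁ = 1 := by
      apply strictMono_perm_eq_one
      intro i j hij
      have hlt : π (Fin.castAdd (d₂ + d₃) i) < π (Fin.castAdd (d₂ + d₃) j) := h1 hij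
      rw [hd] at hlt
      simp only [Equiv.Perm.mul_apply, blockPerm_castAdd] at hlt
      exact hτ'.1.lt_iff_lt.mp hlt
    have hρ₂ : ρ₂ ∈ shuffleFinset d₂ d₃ := by
      rw [mem_shuffleFinset_iff]
      constructor
      · intro i j hij
        have hlt := h2 hij
        rw [hd] at hlt
        simp only [Equiv.Perm.mul_apply, blockPerm_natAdd] at hlt
        exact hτ'.2.lt_iff_lt.mp hlt
      · intro i j hij
        have hlt := h3 hij
        rw [hd] at hlt
        simp only [Equiv.Perm.mul_apply, blockPerm_natAdd] at hlt
        exact hτ'.2.lt_iff_lt.mp hlt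
    refine ⟨(shufflePart π, ρ₂), ?_, ?_⟩
    · simp only [Finset.mem_coe, Finset.mem_product]
      exact ⟨hτ, hρ₂⟩
    · show shufflePart π * blockPerm 1 ρ₂ = π
      rw [show (1 : Equiv.Perm (Fin d₁)) = ρ₁ from hρ₁.symm, ← hd]
  · intro p _
    rfl

end Assoc3
section Assoc3L

open Equiv Finset Function

/-- Transport of a permutation along `(d₁+d₂)+d₃ = d₁+(d₂+d₃)`. -/
def assocPerm (d₁ d₂ d₃ : ℕ) (π : Equiv.Perm (Fin (d₁ + d₂ + d₃))) :
    Equiv.Perm (Fin (d₁ + (d₂ + d₃))) :=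
  (finCongr (Nat.add_assoc d₁ d₂ d₃)).permCongr π

lemma assocPerm_apply {d₁ d₂ d₃ : ℕ} (π : Equiv.Perm (Fin (d₁ + d₂ + d₃)))
    (x : Fin (d₁ + (d₂ + d₃))) :
    assocPerm d₁ d₂ d₃ π x =
      finCongr (Nat.add_assoc d₁ d₂ d₃) (π ((finCongr (Nat.add_assoc d₁ d₂ d₃)).symm x)) := rfl

lemma assocPerm_mul {d₁ d₂ d₃ : ℕ} (π π' : Equiv.Perm (Fin (d₁ + d₂ + d₃))) :
    assocPerm d₁ d₂ d₃ (π * π') = assocPerm d₁ d₂ d₃ π * assocPerm d₁ d₂ d₃ π' := by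
  apply Equiv.ext
  intro x
  simp [assocPerm_apply, Equiv.Perm.mul_apply]

-- coordinate lemmas
lemma coordA {d₁ d₂ d₃ : ℕ} (i : Fin d₁) :
    (finCongr (Nat.add_assoc d₁ d₂ d₃)).symm (Fin.castAdd (d₂ + d₃) i) =
      Fin.castAdd d₃ (Fin.castAdd d₂ i) := by
  simp [Fin.ext_iff]

lemma coordB {d₁ d₂ d₃ : ℕ} (j : Fin d₂) :
    (finCongr (Nat.add_assoc d₁ d₂ d₃)).symm (Fin.natAdd d₁ (Fin.castAdd d₃ j)) =
      Fin.castAdd d₃ (Fin.natAdd d₁ j) := by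
  simp [Fin.ext_iff]

lemma coordC {d₁ d₂ d₃ : ℕ} (k : Fin d₃) :
    (finCongr (Nat.add_assoc d₁ d₂ d₃)).symm (Fin.natAdd d₁ (Fin.natAdd d₂ k)) =
      Fin.natAdd (d₁ + d₂) k := by
  simp [Fin.ext_iff]; omega

lemma coordA' {d₁ d₂ d₃ : ℕ} (i : Fin d₁) :
    finCongr (Nat.add_assoc d₁ d₂ d₃) (Fin.castAdd d₃ (Fin.castAdd d₂ i)) =
      Fin.castAdd (d₂ + d₃) i := by
  simp [Fin.ext_iff]

lemma coordB' {d₁ d₂ d₃ : ℕ} (j : Fin d₂) :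
    finCongr (Nat.add_assoc d₁ d₂ d₃) (Fin.castAdd d₃ (Fin.natAdd d₁ j)) =
      Fin.natAdd d₁ (Fin.castAdd d₃ j) := by
  simp [Fin.ext_iff]

lemma coordC' {d₁ d₂ d₃ : ℕ} (k : Fin d₃) :
    finCongr (Nat.add_assoc d₁ d₂ d₃) (Fin.natAdd (d₁ + d₂) k) =
      Fin.natAdd d₁ (Fin.natAdd d₂ k) := by
  simp [Fin.ext_iff]; omega

lemma finCongr_lt_iff {n m : ℕ} (h : n = m) {x y : Fin n} :
    finCongr h x < finCongr h y ↔ x < y := by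
  subst h
  rw [Fin.lt_def, Fin.lt_def]
  simp

/-- The left-hand-side bijection sum. -/
lemma sumL {d₁ d₂ d₃ : ℕ} {M : Type*} [AddCommMonoid M]
    (g : Equiv.Perm (Fin (d₁ + (d₂ + d₃))) → M) :
    ∑ τ ∈ shuffleFinset (d₁ + d₂) d₃, ∑ σ ∈ shuffleFinset d₁ d₂,
      g (assocPerm d₁ d₂ d₃ (τ * blockPerm σ (1 : Equiv.Perm (Fin d₃)))) =
      ∑ π ∈ shuffle3 d₁ d₂ d₃, g π := by
  rw [← Finset.sum_product']
  refine Finset.sum_nbij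
    (fun p => assocPerm d₁ d₂ d₃ (p.1 * blockPerm p.2 (1 : Equiv.Perm (Fin d₃)))) ?_ ?_ ?_ ?_
  · rintro ⟨τ, σ⟩ hp
    rw [Finset.mem_product] at hp
    obtain ⟨hτ, hσ⟩ := hp
    rw [mem_shuffleFinset_iff] at hτ hσ
    rw [mem_shuffle3_iff]
    refine ⟨?_, ?_, ?_⟩
    · intro i j hij
      show assocPerm d₁ d₂ d₃ _ (Fin.castAdd (d₂ + d₃) i) <
        assocPerm d₁ d₂ d₃ _ (Fin.castAdd (d₂ + d₃) j)
      rw [assocPerm_apply, assocPerm_apply, coordA, coordA, finCongr_lt_iff]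
      simp only [Equiv.Perm.mul_apply, blockPerm_castAdd]
      exact hτ.1 (hσ.1 hij)
    · intro i j hij
      show assocPerm d₁ d₂ d₃ _ (Fin.natAdd d₁ (Fin.castAdd d₃ i)) <
        assocPerm d₁ d₂ d₃ _ (Fin.natAdd d₁ (Fin.castAdd d₃ j))
      rw [assocPerm_apply, assocPerm_apply, coordB, coordB, finCongr_lt_iff]
      simp only [Equiv.Perm.mul_apply, blockPerm_castAdd]
      exact hτ.1 (hσ.2 hij)
    · intro i j hij
      show assocPerm d₁ d₂ d₃ _ (Fin.natAdd d₁ (Fin.natAdd d₂ i)) <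
        assocPerm d₁ d₂ d₃ _ (Fin.natAdd d₁ (Fin.natAdd d₂ j))
      rw [assocPerm_apply, assocPerm_apply, coordC, coordC, finCongr_lt_iff]
      simp only [Equiv.Perm.mul_apply, blockPerm_natAdd, Equiv.Perm.one_apply]
      exact hτ.2 hij
  · rintro ⟨τ, σ⟩ hp ⟨τ', σ'⟩ hp' hEq
    simp only [Finset.mem_coe, Finset.mem_product] at hp hp'
    simp only [] at hEq
    have hEq' : τ * blockPerm σ (1 : Equiv.Perm (Fin d₃)) =
        τ' * blockPerm σ' (1 : Equiv.Perm (Fin d₃)) :=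
      (finCongr (Nat.add_assoc d₁ d₂ d₃)).permCongr.injective hEq
    have hτEq : τ = τ' := shuffle_decomp_unique' hp.1 hp'.1 hEq'
    have hbp : blockPerm σ (1 : Equiv.Perm (Fin d₃)) =
        blockPerm σ' (1 : Equiv.Perm (Fin d₃)) := by
      rw [hτEq] at hEq'
      exact mul_left_cancel hEq'
    have hσEq : σ = σ' := by
      apply Equiv.ext
      intro i
      have := congrArg (fun p => p (Fin.castAdd d₃ i)) hbp
      simp only [blockPerm_castAdd] at this
      exact Fin.castAdd_injective _ _ this
    rw [Prod.ext_iff]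
    exact ⟨hτEq, hσEq⟩
  · intro π hπ
    simp only [Finset.mem_coe, mem_shuffle3_iff] at hπ
    obtain ⟨h1, h2, h3⟩ := hπ
    set π' : Equiv.Perm (Fin (d₁ + d₂ + d₃)) :=
      ((finCongr (Nat.add_assoc d₁ d₂ d₃)).symm).permCongr π with hπ'
    have hback : assocPerm d₁ d₂ d₃ π' = π := by
      apply Equiv.ext
      intro x
      simp [assocPerm_apply, hπ', Equiv.permCongr_apply]
    have hval1 : ∀ i : Fin d₁, π' (Fin.castAdd d₃ (Fin.castAdd d₂ i)) =
        (finCongr (Nat.add_assoc d₁ d₂ d₃)).symm (π (Fin.castAdd (d₂ + d₃) i)) := by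
      intro i
      simp only [hπ', Equiv.permCongr_apply, Equiv.symm_symm, coordA']
    have hval2 : ∀ j : Fin d₂, π' (Fin.castAdd d₃ (Fin.natAdd d₁ j)) =
        (finCongr (Nat.add_assoc d₁ d₂ d₃)).symm (π (Fin.natAdd d₁ (Fin.castAdd d₃ j))) := by
      intro j
      simp only [hπ', Equiv.permCongr_apply, Equiv.symm_symm, coordB']
    have hval3 : ∀ k : Fin d₃, π' (Fin.natAdd (d₁ + d₂) k) =
        (finCongr (Nat.add_assoc d₁ d₂ d₃)).symm (π (Fin.natAdd d₁ (Fin.natAdd d₂ k))) := by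
      intro k
      simp only [hπ', Equiv.permCongr_apply, Equiv.symm_symm, coordC']
    obtain ⟨ρ, ρ₃, hd⟩ := shufflePart_decomp π'
    have hτ := shufflePart_mem π'
    have hτ' := hτ
    rw [mem_shuffleFinset_iff] at hτ'
    have hsymm_lt : ∀ x y : Fin (d₁ + (d₂ + d₃)),
        (finCongr (Nat.add_assoc d₁ d₂ d₃)).symm x <
          (finCongr (Nat.add_assoc d₁ d₂ d₃)).symm y ↔ x < y := by
      intro x y
      rw [finCongr_symm]
      exact finCongr_lt_iff _
    have hρ₃ : ρ₃ = 1 := by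
      apply strictMono_perm_eq_one
      intro i j hij
      have hlt : π' (Fin.natAdd (d₁ + d₂) i) < π' (Fin.natAdd (d₁ + d₂) j) := by
        rw [hval3, hval3, hsymm_lt]
        exact h3 hij
      rw [hd] at hlt
      simp only [Equiv.Perm.mul_apply, blockPerm_natAdd] at hlt
      exact hτ'.2.lt_iff_lt.mp hlt
    have hρ : ρ ∈ shuffleFinset d₁ d₂ := by
      rw [mem_shuffleFinset_iff]
      constructor
      · intro i j hij
        have hlt : π' (Fin.castAdd d₃ (Fin.castAdd d₂ i)) <
            π' (Fin.castAdd d₃ (Fin.castAdd d₂ j)) := by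
          rw [hval1, hval1, hsymm_lt]
          exact h1 hij
        rw [hd] at hlt
        simp only [Equiv.Perm.mul_apply, blockPerm_castAdd] at hlt
        exact hτ'.1.lt_iff_lt.mp hlt
      · intro i j hij
        have hlt : π' (Fin.castAdd d₃ (Fin.natAdd d₁ i)) <
            π' (Fin.castAdd d₃ (Fin.natAdd d₁ j)) := by
          rw [hval2, hval2, hsymm_lt]
          exact h2 hij
        rw [hd] at hlt
        simp only [Equiv.Perm.mul_apply, blockPerm_castAdd] at hlt
        exact hτ'.1.lt_iff_lt.mp hlt
    refine ⟨(shufflePart π', ρ), ?_, ?_⟩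
    · simp only [Finset.mem_coe, Finset.mem_product]
      exact ⟨hτ, hρ⟩
    · show assocPerm d₁ d₂ d₃ (shufflePart π' * blockPerm ρ (1 : Equiv.Perm (Fin d₃))) = π
      rw [show (1 : Equiv.Perm (Fin d₃)) = ρ₃ from hρ₃.symm, ← hd, hback]
  · intro p _
    rfl

end Assoc3L
section Expand

open Equiv Finset Function

set_option synthInstance.maxHeartbeats 1000000 in
lemma kernel_blockInv (F : Type*) [Field F] (G : RatFuncField F 2) {a b : ℕ}
    (ρ₁ : Equiv.Perm (Fin a)) (ρ₂ : Equiv.Perm (Fin b)) :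
    permAct F (blockPerm ρ₁ ρ₂)
      (∏ i : Fin a, ∏ j : Fin b, kerEval F G (Fin.castAdd b i) (Fin.natAdd a j)) =
    ∏ i : Fin a, ∏ j : Fin b, kerEval F G (Fin.castAdd b i) (Fin.natAdd a j) := by
  rw [map_prod]
  have step1 : ∀ i : Fin a,
      permAct F (blockPerm ρ₁ ρ₂) (∏ j : Fin b,
        kerEval F G (Fin.castAdd b i) (Fin.natAdd a j)) =
      ∏ j : Fin b, kerEval F G (Fin.castAdd b (ρ₁ i)) (Fin.natAdd a j) := by
    intro i
    rw [map_prod]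
    rw [← Equiv.prod_comp ρ₂ (fun j => kerEval F G (Fin.castAdd b (ρ₁ i)) (Fin.natAdd a j))]
    apply Finset.prod_congr rfl
    intro j _
    rw [permAct, kerEval_map, blockPerm_castAdd, blockPerm_natAdd]
  calc ∏ i : Fin a, permAct F (blockPerm ρ₁ ρ₂) (∏ j : Fin b,
          kerEval F G (Fin.castAdd b i) (Fin.natAdd a j))
      = ∏ i : Fin a, ∏ j : Fin b,
          kerEval F G (Fin.castAdd b (ρ₁ i)) (Fin.natAdd a j) :=
        Finset.prod_congr rfl fun i _ => step1 i
    _ = _ := Equiv.prod_comp ρ₁ (fun i => ∏ j : Fin b,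
          kerEval F G (Fin.castAdd b i) (Fin.natAdd a j))

set_option synthInstance.maxHeartbeats 1000000 in
lemma permAct_blockPerm_castAdd (F : Type*) [Field F] {a b : ℕ}
    (ρ₁ : Equiv.Perm (Fin a)) (ρ₂ : Equiv.Perm (Fin b)) (x : RatFuncField F a) :
    permAct F (blockPerm ρ₁ ρ₂) (varEmb F (Fin.castAdd b) (Fin.castAdd_injective _ _) x) =
      varEmb F (Fin.castAdd b) (Fin.castAdd_injective _ _) (permAct F ρ₁ x) := by
  rw [permAct, varEmb_comp_apply, permAct, varEmb_comp_apply]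
  apply varEmb_congr
  funext i
  simp [Function.comp]

set_option synthInstance.maxHeartbeats 1000000 in
lemma permAct_blockPerm_natAdd (F : Type*) [Field F] {a b : ℕ}
    (ρ₁ : Equiv.Perm (Fin a)) (ρ₂ : Equiv.Perm (Fin b)) (x : RatFuncField F b) :
    permAct F (blockPerm ρ₁ ρ₂) (varEmb F (Fin.natAdd a) (natAdd_inj _ _) x) =
      varEmb F (Fin.natAdd a) (natAdd_inj _ _) (permAct F ρ₂ x) := by
  rw [permAct, varEmb_comp_apply, permAct, varEmb_comp_apply]
  apply varEmb_congr
  funext j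
  simp [Function.comp]

/-- The canonical fully-expanded triple product integrand. -/
def bigX (F : Type*) [Field F] (G : RatFuncField F 2) {d₁ d₂ d₃ : ℕ}
    (f : RatFuncField F d₁) (h : RatFuncField F d₂) (e : RatFuncField F d₃) :
    RatFuncField F (d₁ + (d₂ + d₃)) :=
  (∏ i : Fin d₁, ∏ j : Fin d₂,
      kerEval F G (Fin.castAdd (d₂ + d₃) i) (Fin.natAdd d₁ (Fin.castAdd d₃ j))) *
  (∏ i : Fin d₁, ∏ k : Fin d₃,
      kerEval F G (Fin.castAdd (d₂ + d₃) i) (Fin.natAdd d₁ (Fin.natAdd d₂ k))) *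
  (∏ j : Fin d₂, ∏ k : Fin d₃,
      kerEval F G (Fin.natAdd d₁ (Fin.castAdd d₃ j)) (Fin.natAdd d₁ (Fin.natAdd d₂ k))) *
  varEmb F (Fin.castAdd (d₂ + d₃)) (Fin.castAdd_injective _ _) f *
  varEmb F (Fin.natAdd d₁ ∘ Fin.castAdd d₃)
    ((natAdd_inj _ _).comp (Fin.castAdd_injective _ _)) h *
  varEmb F (Fin.natAdd d₁ ∘ Fin.natAdd d₂)
    ((natAdd_inj _ _).comp (natAdd_inj _ _)) e

set_option synthInstance.maxHeartbeats 1000000 in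
set_option maxHeartbeats 1000000 in
/-- The inner integrand of the right-associated product equals `bigX`. -/
lemma rhs_core (F : Type*) [Field F] (G : RatFuncField F 2) {d₁ d₂ d₃ : ℕ}
    (f : RatFuncField F d₁) (h : RatFuncField F d₂) (e : RatFuncField F d₃) :
    (∏ i : Fin d₁, ∏ j : Fin (d₂ + d₃),
        kerEval F G (Fin.castAdd (d₂ + d₃) i) (Fin.natAdd d₁ j)) *
      varEmb F (Fin.castAdd (d₂ + d₃)) (Fin.castAdd_injective _ _) f *
      varEmb F (Fin.natAdd d₁) (natAdd_inj _ _)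
        ((∏ j : Fin d₂, ∏ k : Fin d₃,
            kerEval F G (Fin.castAdd d₃ j) (Fin.natAdd d₂ k)) *
          varEmb F (Fin.castAdd d₃) (Fin.castAdd_injective _ _) h *
          varEmb F (Fin.natAdd d₂) (natAdd_inj _ _) e) =
      bigX F G f h e := by
  have h1 : (∏ i : Fin d₁, ∏ j : Fin (d₂ + d₃),
      kerEval F G (Fin.castAdd (d₂ + d₃) i) (Fin.natAdd d₁ j)) =
      (∏ i : Fin d₁, ∏ j : Fin d₂,
        kerEval F G (Fin.castAdd (d₂ + d₃) i) (Fin.natAdd d₁ (Fin.castAdd d₃ j))) *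
      (∏ i : Fin d₁, ∏ k : Fin d₃,
        kerEval F G (Fin.castAdd (d₂ + d₃) i) (Fin.natAdd d₁ (Fin.natAdd d₂ k))) := by
    rw [← Finset.prod_mul_distrib]
    apply Finset.prod_congr rfl
    intro i _
    exact Fin.prod_univ_add fun j => kerEval F G (Fin.castAdd (d₂ + d₃) i) (Fin.natAdd d₁ j)
  have h2 : varEmb F (Fin.natAdd d₁) (natAdd_inj _ _)
      ((∏ j : Fin d₂, ∏ k : Fin d₃,
          kerEval F G (Fin.castAdd d₃ j) (Fin.natAdd d₂ k)) *
        varEmb F (Fin.castAdd d₃) (Fin.castAdd_injective _ _) h *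
        varEmb F (Fin.natAdd d₂) (natAdd_inj _ _) e) =
      (∏ j : Fin d₂, ∏ k : Fin d₃,
        kerEval F G (Fin.natAdd d₁ (Fin.castAdd d₃ j)) (Fin.natAdd d₁ (Fin.natAdd d₂ k))) *
      varEmb F (Fin.natAdd d₁ ∘ Fin.castAdd d₃)
        ((natAdd_inj _ _).comp (Fin.castAdd_injective _ _)) h *
      varEmb F (Fin.natAdd d₁ ∘ Fin.natAdd d₂)
        ((natAdd_inj _ _).comp (natAdd_inj _ _)) e := by
    rw [map_mul, map_mul, map_prod]
    congr 1
    · congr 1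
      · apply Finset.prod_congr rfl
        intro j _
        rw [map_prod]
        apply Finset.prod_congr rfl
        intro k _
        rw [kerEval_map]
      · rw [varEmb_comp_apply]
    · rw [varEmb_comp_apply]
  rw [h1, h2, bigX]
  ring

set_option synthInstance.maxHeartbeats 1000000 in
set_option maxHeartbeats 1000000 in
lemma R_persigma (F : Type*) [Field F] (G : RatFuncField F 2) {d₁ d₂ d₃ : ℕ}
    (f : RatFuncField F d₁) (σ : Equiv.Perm (Fin (d₂ + d₃))) (W : RatFuncField F (d₂ + d₃)) :
    (∏ i : Fin d₁, ∏ j : Fin (d₂ + d₃),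
        kerEval F G (Fin.castAdd (d₂ + d₃) i) (Fin.natAdd d₁ j)) *
      varEmb F (Fin.castAdd (d₂ + d₃)) (Fin.castAdd_injective _ _) f *
      varEmb F (Fin.natAdd d₁) (natAdd_inj _ _) (permAct F σ W) =
    permAct F (blockPerm (1 : Equiv.Perm (Fin d₁)) σ)
      ((∏ i : Fin d₁, ∏ j : Fin (d₂ + d₃),
          kerEval F G (Fin.castAdd (d₂ + d₃) i) (Fin.natAdd d₁ j)) *
        varEmb F (Fin.castAdd (d₂ + d₃)) (Fin.castAdd_injective _ _) f *
        varEmb F (Fin.natAdd d₁) (natAdd_inj _ _) W) := by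
  conv_rhs => rw [map_mul, map_mul, kernel_blockInv, permAct_blockPerm_castAdd, permAct_one,
    permAct_blockPerm_natAdd]

set_option synthInstance.maxHeartbeats 1000000 in
set_option maxHeartbeats 1000000 in
/-- Right-associated product, fully expanded. -/
lemma shuffleMul_right_expand (F : Type*) [Field F] (G : RatFuncField F 2) {d₁ d₂ d₃ : ℕ}
    (f : RatFuncField F d₁) (h : RatFuncField F d₂) (e : RatFuncField F d₃) :
    shuffleMul F G f (shuffleMul F G h e) =
      ∑ τ ∈ shuffleFinset d₁ (d₂ + d₃), ∑ σ ∈ shuffleFinset d₂ d₃,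
        permAct F (τ * blockPerm (1 : Equiv.Perm (Fin d₁)) σ) (bigX F G f h e) := by
  rw [shuffleMul]
  apply Finset.sum_congr rfl
  intro τ _
  rw [shuffleMul, map_sum, Finset.mul_sum, map_sum]
  apply Finset.sum_congr rfl
  intro σ _
  rw [← permAct_permAct]
  congr 1
  rw [← rhs_core F G f h e]
  exact R_persigma F G f σ _

end Expand
section ExpandL

open Equiv Finset Function

set_option synthInstance.maxHeartbeats 1000000 in
set_option maxHeartbeats 1000000 in
lemma L_persigma (F : Type*) [Field F] (G : RatFuncField F 2) {d₁ d₂ d₃ : ℕ}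
    (e : RatFuncField F d₃) (σ : Equiv.Perm (Fin (d₁ + d₂))) (V : RatFuncField F (d₁ + d₂)) :
    (∏ i : Fin (d₁ + d₂), ∏ k : Fin d₃,
        kerEval F G (Fin.castAdd d₃ i) (Fin.natAdd (d₁ + d₂) k)) *
      varEmb F (Fin.castAdd d₃) (Fin.castAdd_injective _ _) (permAct F σ V) *
      varEmb F (Fin.natAdd (d₁ + d₂)) (natAdd_inj _ _) e =
    permAct F (blockPerm σ (1 : Equiv.Perm (Fin d₃)))
      ((∏ i : Fin (d₁ + d₂), ∏ k : Fin d₃,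
          kerEval F G (Fin.castAdd d₃ i) (Fin.natAdd (d₁ + d₂) k)) *
        varEmb F (Fin.castAdd d₃) (Fin.castAdd_injective _ _) V *
        varEmb F (Fin.natAdd (d₁ + d₂)) (natAdd_inj _ _) e) := by
  conv_rhs => rw [map_mul, map_mul, kernel_blockInv, permAct_blockPerm_castAdd,
    permAct_blockPerm_natAdd, permAct_one]

set_option synthInstance.maxHeartbeats 1000000 in
set_option maxHeartbeats 1000000 in
lemma varEmb_assoc_permAct (F : Type*) [Field F] {d₁ d₂ d₃ : ℕ}
    (π : Equiv.Perm (Fin (d₁ + d₂ + d₃))) (y : RatFuncField F (d₁ + d₂ + d₃)) :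
    varEmb F (finCongr (Nat.add_assoc d₁ d₂ d₃))
        (finCongr (Nat.add_assoc d₁ d₂ d₃)).injective (permAct F π y) =
      permAct F (assocPerm d₁ d₂ d₃ π)
        (varEmb F (finCongr (Nat.add_assoc d₁ d₂ d₃))
          (finCongr (Nat.add_assoc d₁ d₂ d₃)).injective y) := by
  rw [permAct, varEmb_comp_apply, permAct, varEmb_comp_apply]
  apply varEmb_congr
  funext x
  simp [Function.comp, assocPerm_apply]

set_option synthInstance.maxHeartbeats 1000000 in
set_option maxHeartbeats 1000000 in
/-- Transporting the left-associated integrand along `finCongr` gives `bigX`. -/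
lemma lhs_core (F : Type*) [Field F] (G : RatFuncField F 2) {d₁ d₂ d₃ : ℕ}
    (f : RatFuncField F d₁) (h : RatFuncField F d₂) (e : RatFuncField F d₃) :
    varEmb F (finCongr (Nat.add_assoc d₁ d₂ d₃))
        (finCongr (Nat.add_assoc d₁ d₂ d₃)).injective
      ((∏ i : Fin (d₁ + d₂), ∏ k : Fin d₃,
          kerEval F G (Fin.castAdd d₃ i) (Fin.natAdd (d₁ + d₂) k)) *
        varEmb F (Fin.castAdd d₃) (Fin.castAdd_injective _ _)
          ((∏ i : Fin d₁, ∏ j : Fin d₂,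
              kerEval F G (Fin.castAdd d₂ i) (Fin.natAdd d₁ j)) *
            varEmb F (Fin.castAdd d₂) (Fin.castAdd_injective _ _) f *
            varEmb F (Fin.natAdd d₁) (natAdd_inj _ _) h) *
        varEmb F (Fin.natAdd (d₁ + d₂)) (natAdd_inj _ _) e) =
      bigX F G f h e := by
  set c := finCongr (Nat.add_assoc d₁ d₂ d₃) with hc
  rw [map_mul, map_mul]
  have hK : varEmb F c c.injective
      (∏ i : Fin (d₁ + d₂), ∏ k : Fin d₃,
        kerEval F G (Fin.castAdd d₃ i) (Fin.natAdd (d₁ + d₂) k)) =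
      (∏ i : Fin d₁, ∏ k : Fin d₃,
        kerEval F G (Fin.castAdd (d₂ + d₃) i) (Fin.natAdd d₁ (Fin.natAdd d₂ k))) *
      (∏ j : Fin d₂, ∏ k : Fin d₃,
        kerEval F G (Fin.natAdd d₁ (Fin.castAdd d₃ j)) (Fin.natAdd d₁ (Fin.natAdd d₂ k))) := by
    rw [map_prod]
    have step : ∀ i : Fin (d₁ + d₂),
        varEmb F c c.injective (∏ k : Fin d₃,
          kerEval F G (Fin.castAdd d₃ i) (Fin.natAdd (d₁ + d₂) k)) =
        ∏ k : Fin d₃, kerEval F G (c (Fin.castAdd d₃ i)) (Fin.natAdd d₁ (Fin.natAdd d₂ k)) := by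
      intro i
      rw [map_prod]
      apply Finset.prod_congr rfl
      intro k _
      rw [kerEval_map, hc, coordC']
    rw [Finset.prod_congr rfl fun i _ => step i]
    rw [Fin.prod_univ_add (fun i : Fin (d₁ + d₂) =>
      ∏ k : Fin d₃, kerEval F G (c (Fin.castAdd d₃ i)) (Fin.natAdd d₁ (Fin.natAdd d₂ k)))]
    rw [hc]
    simp only [coordA', coordB']
  have hV : varEmb F c c.injective
      (varEmb F (Fin.castAdd d₃) (Fin.castAdd_injective _ _)
        ((∏ i : Fin d₁, ∏ j : Fin d₂,
            kerEval F G (Fin.castAdd d₂ i) (Fin.natAdd d₁ j)) *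
          varEmb F (Fin.castAdd d₂) (Fin.castAdd_injective _ _) f *
          varEmb F (Fin.natAdd d₁) (natAdd_inj _ _) h)) =
      (∏ i : Fin d₁, ∏ j : Fin d₂,
        kerEval F G (Fin.castAdd (d₂ + d₃) i) (Fin.natAdd d₁ (Fin.castAdd d₃ j))) *
      varEmb F (Fin.castAdd (d₂ + d₃)) (Fin.castAdd_injective _ _) f *
      varEmb F (Fin.natAdd d₁ ∘ Fin.castAdd d₃)
        ((natAdd_inj _ _).comp (Fin.castAdd_injective _ _)) h := by
    rw [varEmb_comp_apply, map_mul, map_mul]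
    congr 1
    · congr 1
      · rw [map_prod]
        apply Finset.prod_congr rfl
        intro i _
        rw [map_prod]
        apply Finset.prod_congr rfl
        intro j _
        rw [kerEval_map]
        simp only [Function.comp_apply]
        rw [hc, coordA', coordB']
      · rw [varEmb_comp_apply]
        apply varEmb_congr
        funext i
        simp only [Function.comp_apply]
        rw [hc, coordA']
    · rw [varEmb_comp_apply]
      apply varEmb_congr
      funext j
      simp only [Function.comp_apply]
      rw [hc, coordB']
  have hE : varEmb F c c.injective
      (varEmb F (Fin.natAdd (d₁ + d₂)) (natAdd_inj _ _) e) =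
      varEmb F (Fin.natAdd d₁ ∘ Fin.natAdd d₂)
        ((natAdd_inj _ _).comp (natAdd_inj _ _)) e := by
    rw [varEmb_comp_apply]
    apply varEmb_congr
    funext k
    simp only [Function.comp_apply]
    rw [hc, coordC']
  rw [hK, hV, hE, bigX]
  ring

set_option synthInstance.maxHeartbeats 1000000 in
set_option maxHeartbeats 1000000 in
/-- Left-associated product, fully expanded. -/
lemma shuffleMul_left_expand (F : Type*) [Field F] (G : RatFuncField F 2) {d₁ d₂ d₃ : ℕ}
    (f : RatFuncField F d₁) (h : RatFuncField F d₂) (e : RatFuncField F d₃) :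
    varEmb F (finCongr (Nat.add_assoc d₁ d₂ d₃))
        (finCongr (Nat.add_assoc d₁ d₂ d₃)).injective
      (shuffleMul F G (shuffleMul F G f h) e) =
      ∑ τ ∈ shuffleFinset (d₁ + d₂) d₃, ∑ σ ∈ shuffleFinset d₁ d₂,
        permAct F (assocPerm d₁ d₂ d₃ (τ * blockPerm σ (1 : Equiv.Perm (Fin d₃))))
          (bigX F G f h e) := by
  rw [shuffleMul, map_sum]
  apply Finset.sum_congr rfl
  intro τ _
  rw [shuffleMul, map_sum, Finset.mul_sum, Finset.sum_mul, map_sum, map_sum]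
  apply Finset.sum_congr rfl
  intro σ _
  rw [L_persigma, permAct_permAct, varEmb_assoc_permAct, lhs_core]

end ExpandL
/-- **The shuffle algebra with kernel `G` is an associative unital graded `F`-algebra.**
On `A = ⊕_d (F_d)^{S_d}` the twisted symmetrization product `Ξ` with kernel `G ∈ F(x,y)`
takes symmetric elements to symmetric elements, is associative (up to the canonical
identification `F_{(d₁+d₂)+d₃} ≅ F_{d₁+(d₂+d₃)}`), is `F`-bilinear, and has
`1 ∈ F_0` as a unit (the identification `F_{0+d} ≅ F_d` being canonical). -/
theorem shuffle_algebra_associative (F : Type*) [Field F] (G : RatFuncField F 2) :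
    -- invariance
    (∀ (d₁ d₂ : ℕ) (f : RatFuncField F d₁) (h : RatFuncField F d₂),
      SymmInvariant F f → SymmInvariant F h → SymmInvariant F (shuffleMul F G f h)) ∧
    -- associativity
    (∀ (d₁ d₂ d₃ : ℕ) (f : RatFuncField F d₁) (h : RatFuncField F d₂)
        (e : RatFuncField F d₃),
      SymmInvariant F f → SymmInvariant F h → SymmInvariant F e →
      varEmb F (finCongr (Nat.add_assoc d₁ d₂ d₃))
          (finCongr (Nat.add_assoc d₁ d₂ d₃)).injective
          (shuffleMul F G (shuffleMul F G f h) e) =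
        shuffleMul F G f (shuffleMul F G h e)) ∧
    -- additivity in each argument
    (∀ (d₁ d₂ : ℕ) (f f' : RatFuncField F d₁) (h : RatFuncField F d₂),
      shuffleMul F G (f + f') h = shuffleMul F G f h + shuffleMul F G f' h) ∧
    (∀ (d₁ d₂ : ℕ) (f : RatFuncField F d₁) (h h' : RatFuncField F d₂),
      shuffleMul F G f (h + h') = shuffleMul F G f h + shuffleMul F G f h') ∧
    -- F-bilinearity
    (∀ (d₁ d₂ : ℕ) (c : F) (f : RatFuncField F d₁) (h : RatFuncField F d₂),
      shuffleMul F G (constEmb F d₁ c * f) h =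
          constEmb F (d₁ + d₂) c * shuffleMul F G f h ∧
        shuffleMul F G f (constEmb F d₂ c * h) =
          constEmb F (d₁ + d₂) c * shuffleMul F G f h) ∧
    -- `1 ∈ F_0` is a right unit
    (∀ (d : ℕ) (f : RatFuncField F d), SymmInvariant F f →
      shuffleMul F G f (1 : RatFuncField F 0) = f) ∧
    -- `1 ∈ F_0` is a left unit
    (∀ (d : ℕ) (f : RatFuncField F d), SymmInvariant F f →
      varEmb F (finCongr (Nat.zero_add d)) (finCongr (Nat.zero_add d)).injective
        (shuffleMul F G (1 : RatFuncField F 0) f) = f) := by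
  refine ⟨?_, ?_, ?_, ?_, ?_, ?_, ?_⟩
  · intro d₁ d₂ f h hf hh
    exact shuffleMul_invariant F G f h hf hh
  · intro d₁ d₂ d₃ f h e _ _ _
    rw [shuffleMul_left_expand, shuffleMul_right_expand]
    exact (sumL (fun π => permAct F π (bigX F G f h e))).trans
      (sumR (fun π => permAct F π (bigX F G f h e))).symm
  · exact fun d₁ d₂ f f' h => shuffleMul_add_left F G f f' h
  · exact fun d₁ d₂ f h h' => shuffleMul_add_right F G f h h'
  · intro d₁ d₂ c f h
    exact ⟨shuffleMul_smul_left F G c f h, shuffleMul_smul_right F G c f h⟩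
  · intro d f _
    exact shuffleMul_one_right F G f
  · intro d f _
    exact shuffleMul_one_left F G f

end
end
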